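/- arXiv:1601.03924 — 5 statements merged into one kernel-verified Lean document; each statement's English description precedes it below -/
import Mathlib

section
/- Let λ ∈ ℂ^n be of standard block form and let μ ∈ ℂ^n. Then the following are equivalent: (a) μ − λ ∈ ℤΦ and there exist w ∈ W, complex numbers k_j, and finitely many pairwise orthogonal roots α_j ∈ Φ with (λ, ᾱ_j) = 0 for all j, such that μ = w(λ − Σ_j k_j α_j); (b) λ ≈ μ, i.e. the same conclusion holds with w ∈ W_λ and all k_j ∈ ℤ. -/
open Finset

noncomputable section

/-- The `i`-th standard basis vector of `ℂ^n`. -/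
def eps (n : ℕ) (i : Fin n) : Fin n → ℂ := fun t => if t = i then 1 else 0

/-- The standard symmetric bilinear form on `ℂ^n`. -/
def pform {n : ℕ} (x y : Fin n → ℂ) : ℂ := ∑ i, x i * y i

/-- The integral Weyl group `W_λ`: the subgroup of `S_n` generated by the transpositions
`s_{ij}` with `λ_i - λ_j ∈ ℤ`. -/
def IntegralWeyl (n : ℕ) (lam : Fin n → ℂ) : Subgroup (Equiv.Perm (Fin n)) :=
  Subgroup.closure
    {σ | ∃ i j : Fin n, i ≠ j ∧ (∃ m : ℤ, lam i - lam j = (m : ℂ)) ∧ σ = Equiv.swap i j}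

/-- The relation `λ ≈ μ`: there are `w ∈ W_λ`, finitely many pairwise orthogonal roots
`α_t = ε_{a t} - ε_{b t}` with `(λ, ᾱ_t) = 0`, and integers `k_t`, such that
`μ = w (λ - ∑_t k_t α_t)`. -/
def approx (n : ℕ) (lam mu : Fin n → ℂ) : Prop :=
  ∃ w ∈ IntegralWeyl n lam, ∃ (N : ℕ) (a b : Fin N → Fin n) (k : Fin N → ℤ),
    (∀ t, a t ≠ b t) ∧
    (∀ t t', t ≠ t' →
      pform (eps n (a t) - eps n (b t)) (eps n (a t') - eps n (b t')) = 0) ∧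
    (∀ t, pform lam (eps n (a t) + eps n (b t)) = 0) ∧
    mu = (lam - ∑ t, (k t : ℂ) • (eps n (a t) - eps n (b t))) ∘ w

/-- Data exhibiting `λ ∈ ℂ^n` as being of standard block form: `{1,…,n}` is partitioned
into consecutive intervals of sizes `sz 0, …, sz (k-1)`, with parameters `s 0 = 0`,
`s 1 = 1/2`, and `s r ≢ ± s r'` mod `ℤ` for `r ≠ r'`, together with `ell r ≤ sz r`,
such that on the `r`-th interval the coordinates of `λ` lie in `Λ_{(s r)^(ell r)}(sz r)`. -/
structure StdBlockData (n : ℕ) (lam : Fin n → ℂ) where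
  k : ℕ
  hk : 2 ≤ k
  sz : Fin k → ℕ
  hsum : ∑ r, sz r = n
  s : Fin k → ℂ
  ell : Fin k → ℕ
  hell : ∀ r, ell r ≤ sz r
  hs0 : s ⟨0, by omega⟩ = 0
  hs1 : s ⟨1, by omega⟩ = 1 / 2
  hdist : ∀ r r' : Fin k, r ≠ r' →
    (∀ m : ℤ, s r - s r' ≠ (m : ℂ)) ∧ (∀ m : ℤ, s r + s r' ≠ (m : ℂ))
  hlam : ∀ (r : Fin k) (i : Fin n),
    (∑ r' ∈ Finset.univ.filter (· < r), sz r') ≤ i.val →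
    i.val < (∑ r' ∈ Finset.univ.filter (· < r), sz r') + sz r →
    (i.val < (∑ r' ∈ Finset.univ.filter (· < r), sz r') + ell r →
      ∃ m : ℤ, lam i - s r = (m : ℂ)) ∧
    ((∑ r' ∈ Finset.univ.filter (· < r), sz r') + ell r ≤ i.val →
      ∃ m : ℤ, lam i + s r = (m : ℂ))

/-- The starting index of the `r`-th block. -/
def blkStart {n : ℕ} {lam : Fin n → ℂ} (D : StdBlockData n lam) (r : Fin D.k) : ℕ :=
  ∑ r' ∈ Finset.univ.filter (· < r), D.sz r'

/-- The `r`-th block `I_r`, as a set of indices. -/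
def blockSet {n : ℕ} {lam : Fin n → ℂ} (D : StdBlockData n lam) (r : Fin D.k) :
    Set (Fin n) :=
  {i | blkStart D r ≤ i.val ∧ i.val < blkStart D r + D.sz r}

/-!
Write `ν_c = λ - ∑ c_t α_t`. Orthogonality makes the `2N` indices `a_t, b_t` distinct and
`(λ, ᾱ_t) = 0` says `λ_{b_t} = -λ_{a_t}`, so the multiset of coordinates of `ν_c` consists of the
pairs `±(λ_{a_t} - c_t)` and the coordinates of `λ` off these indices. If `μ = w ν_c` is congruent
to `λ` mod `ℤ`, comparing these multisets mod `ℤ` matches, up to sign and a reindexing of `t`,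
each `λ_{a_t} - c_t` with some `λ_{a_s}`; hence the `c_t` can be replaced by integers `k_t`
without changing the multiset of coordinates, and `μ = σ ν_k` for a permutation `σ`. Such a `σ`
preserves the classes of the coordinates of `λ` mod `ℤ`, and `W_λ` is exactly the group of these
permutations.
-/

open Function

theorem Equiv.Perm.exists_comp_eq_of_map_univ_eq {ι β : Type*} [Fintype ι] {f g : ι → β}
    (h : univ.val.map f = univ.val.map g) : ∃ σ : Equiv.Perm ι, g ∘ σ = f := by
  classical
  have hcard (y : β) : Fintype.card {i // f i = y} = Fintype.card {i // g i = y} := by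
    simpa [Fintype.card_subtype, Multiset.count_map, Finset.card, Finset.filter, eq_comm] using
      congrArg (Multiset.count y) h
  exact ⟨Equiv.ofFiberEquiv fun y => Fintype.equivOfCardEq (hcard y),
    funext (Equiv.ofFiberEquiv_map _)⟩

theorem Equiv.Perm.mem_closure_swaps_iff {α β : Type*} [Finite α] [DecidableEq α] (f : α → β)
    {σ : Equiv.Perm α} :
    σ ∈ Subgroup.closure {τ | ∃ i j, i ≠ j ∧ f i = f j ∧ τ = Equiv.swap i j} ↔ f ∘ σ = f := by
  constructor
  · intro hσ
    induction hσ using Subgroup.closure_induction with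
    | mem τ hτ =>
      obtain ⟨i, j, -, hij, rfl⟩ := hτ
      ext x
      rw [comp_apply, Equiv.swap_apply_def]
      split_ifs with hi hj
      · rw [hi, hij]
      · rw [hj, hij]
      · rfl
    | one => rfl
    | mul g h _ _ hg hh => rw [Equiv.Perm.coe_mul, ← comp_assoc, hg, hh]
    | inv g _ hg => rw [← hg, comp_assoc, Equiv.Perm.coe_inv, Equiv.self_comp_symm, comp_id, hg]
  · intro hf
    refine (mem_closure_isSwap ?_).mpr ⟨Set.toFinite _, fun x => ?_⟩
    · rintro τ ⟨i, j, hij, -, rfl⟩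
      exact ⟨i, j, hij, rfl⟩
    refine ⟨⟨Equiv.swap x (σ x), ?_⟩, Equiv.swap_apply_left x (σ x)⟩
    by_cases hx : x = σ x
    · rw [← hx, Equiv.swap_self]
      exact Subgroup.one_mem _
    · exact Subgroup.subset_closure ⟨x, σ x, hx, (congrFun hf x).symm, rfl⟩

theorem Multiset.map_univ_eq_sum {ι α : Type*} [Fintype ι] (f : ι → α) :
    univ.val.map f = ∑ t, {f t} := by
  rw [Finset.sum_eq_multiset_sum, ← Multiset.sum_map_singleton (univ.val.map f), Multiset.map_map]
  rfl

theorem Multiset.map_univ_sumElim {ι α : Type*} [Fintype ι] (f g : ι → α) :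
    univ.val.map (Sum.elim f g) = ∑ t, {f t, g t} := by
  rw [Multiset.map_univ_eq_sum, Fintype.sum_sum_type, ← Finset.sum_add_distrib]
  simp [Multiset.insert_eq_cons, Multiset.singleton_add]

section SymmPairs

variable {ι G : Type*} [Fintype ι]

def symmPairs [Neg G] (p : ι → G) : Multiset G := ∑ t, {p t, -p t}

variable [InvolutiveNeg G]

theorem symmPairs_comp_perm (p : ι → G) (σ : Equiv.Perm ι) :
    symmPairs (p ∘ σ) = symmPairs p :=
  Equiv.sum_comp σ fun t => ({p t, -p t} : Multiset G)

theorem symmPairs_congr {p q : ι → G} (h : ∀ t, p t = q t ∨ p t = -q t) :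
    symmPairs p = symmPairs q := by
  refine Finset.sum_congr rfl fun t _ => ?_
  rcases h t with h | h <;> rw [h]
  rw [neg_neg, Multiset.pair_comm]

theorem map_symmPairs_sym2 (p : ι → G) :
    (symmPairs p).map (fun g => s(g, -g)) = 2 • univ.val.map (fun t => s(p t, -p t)) := by
  rw [symmPairs, ← Multiset.coe_mapAddMonoidHom, map_sum, Multiset.map_univ_eq_sum,
    Finset.smul_sum]
  refine Finset.sum_congr rfl fun t _ => ?_
  rw [Multiset.coe_mapAddMonoidHom, Multiset.insert_eq_cons, Multiset.map_cons,
    Multiset.map_singleton, neg_neg, Sym2.eq_swap, two_nsmul, Multiset.singleton_add]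

theorem symmPairs_eq_symmPairs_iff {p q : ι → G} :
    symmPairs p = symmPairs q ↔ ∃ σ : Equiv.Perm ι, ∀ t, p (σ t) = q t ∨ p (σ t) = -q t := by
  classical
  constructor
  · intro h
    -- sending `g` to `s(g, -g)` turns `symmPairs p` into twice the multiset of these classes
    have h2 := congrArg (Multiset.map fun g => s(g, -g)) h
    rw [map_symmPairs_sym2, map_symmPairs_sym2] at h2
    have h3 : univ.val.map (fun t => s(q t, -q t)) = univ.val.map (fun t => s(p t, -p t)) := by
      refine Multiset.ext.mpr fun x => ?_
      have := congrArg (Multiset.count x) h2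
      rw [Multiset.count_nsmul, Multiset.count_nsmul] at this
      omega
    obtain ⟨σ, hσ⟩ := Equiv.Perm.exists_comp_eq_of_map_univ_eq h3
    refine ⟨σ, fun t => ?_⟩
    have := congrFun hσ t
    simp only [comp_apply, Sym2.eq_iff] at this
    tauto
  · rintro ⟨σ, hσ⟩
    rw [← symmPairs_comp_perm p σ]
    exact symmPairs_congr hσ

theorem map_univ_eq_symmPairs_add {α : Type*} [Fintype α] [DecidableEq α] {a b : ι → α}
    (hinj : Injective (Sum.elim a b)) {v : α → G} (hv : ∀ t, v (b t) = -v (a t)) :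
    univ.val.map v = symmPairs (v ∘ a) + (univ.map ⟨_, hinj⟩)ᶜ.val.map v := by
  rw [← Finset.union_compl (univ.map ⟨_, hinj⟩),
    ← Finset.disjUnion_eq_union _ _ disjoint_compl_right, Finset.disjUnion_val, Multiset.map_add,
    Finset.map_val, Multiset.map_map]
  congr 1
  have : v ∘ Sum.elim a b = Sum.elim (v ∘ a) (-(v ∘ a)) := by
    ext (t | t) <;> simp [hv]
  rw [Function.Embedding.coeFn_mk, this, Multiset.map_univ_sumElim]
  rfl

end SymmPairs

abbrev ComplexModInt : Type := ℂ ⧸ AddSubgroup.zmultiples (1 : ℂ)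

theorem ComplexModInt.mk_eq_mk_iff {x y : ℂ} : (x : ComplexModInt) = y ↔ ∃ m : ℤ, x - y = m := by
  simp [QuotientAddGroup.eq_iff_sub_mem, AddSubgroup.mem_zmultiples_iff, eq_comm]

theorem exists_intCast_symmPairs_eq {ι : Type*} [Fintype ι] {x y : ι → ℂ}
    (h : symmPairs (fun t => (y t : ComplexModInt)) = symmPairs (fun t => (x t : ComplexModInt))) :
    ∃ k : ι → ℤ, symmPairs (fun t => x t - k t) = symmPairs y := by
  obtain ⟨σ, hσ⟩ := symmPairs_eq_symmPairs_iff.mp h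
  have hk (t : ι) : ∃ m : ℤ, y (σ t) = x t - m ∨ y (σ t) = -(x t - m) := by
    rcases hσ t with h | h
    · obtain ⟨m, hm⟩ := ComplexModInt.mk_eq_mk_iff.mp h
      exact ⟨-m, Or.inl (by push_cast; linear_combination hm)⟩
    · rw [← QuotientAddGroup.mk_neg] at h
      obtain ⟨m, hm⟩ := ComplexModInt.mk_eq_mk_iff.mp h
      exact ⟨m, Or.inr (by linear_combination hm)⟩
  choose k hk using hk
  exact ⟨k, (symmPairs_eq_symmPairs_iff.mpr ⟨σ, hk⟩).symm⟩

theorem mem_integralWeyl_iff {n : ℕ} {lam : Fin n → ℂ} {σ : Equiv.Perm (Fin n)} :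
    σ ∈ IntegralWeyl n lam ↔ ∀ i, (lam (σ i) : ComplexModInt) = lam i := by
  have : IntegralWeyl n lam = Subgroup.closure
      {τ | ∃ i j, i ≠ j ∧ (lam i : ComplexModInt) = lam j ∧ τ = Equiv.swap i j} := by
    simp only [IntegralWeyl, ComplexModInt.mk_eq_mk_iff]
  rw [this, Equiv.Perm.mem_closure_swaps_iff (fun i => (lam i : ComplexModInt)), funext_iff]
  rfl

section Roots

variable {n N : ℕ}

theorem pform_eps_right (x : Fin n → ℂ) (i : Fin n) : pform x (eps n i) = x i := by
  simp [pform, eps]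

theorem pform_add_right (x y z : Fin n → ℂ) : pform x (y + z) = pform x y + pform x z := by
  simp [pform, mul_add, sum_add_distrib]

theorem pform_sub_right (x y z : Fin n → ℂ) : pform x (y - z) = pform x y - pform x z := by
  simp [pform, mul_sub, sum_sub_distrib]

theorem ne_of_pform_eps_sub_eps_eq_zero {i j i' j' : Fin n} (hij : i ≠ j) (hij' : i' ≠ j')
    (h : pform (eps n i - eps n j) (eps n i' - eps n j') = 0) :
    i ≠ i' ∧ i ≠ j' ∧ j ≠ i' ∧ j ≠ j' := by
  simp only [pform_sub_right, pform_eps_right, Pi.sub_apply, eps] at h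
  refine ⟨?_, ?_, ?_, ?_⟩ <;> rintro rfl <;> split_ifs at h <;> grind

theorem injective_sumElim_of_pairwise_orthogonal {a b : Fin N → Fin n} (hab : ∀ t, a t ≠ b t)
    (horth : ∀ t t', t ≠ t' →
      pform (eps n (a t) - eps n (b t)) (eps n (a t') - eps n (b t')) = 0) :
    Injective (Sum.elim a b) := by
  have hne (t t' : Fin N) (h : t ≠ t') :=
    ne_of_pform_eps_sub_eps_eq_zero (hab t) (hab t') (horth t t' h)
  rintro (t | t) (t' | t') h <;> simp only [Sum.elim_inl, Sum.elim_inr, Sum.inl.injEq,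
    Sum.inr.injEq, reduceCtorEq] at h ⊢ <;> by_contra htt'
  · exact (hne t t' htt').1 h
  · obtain rfl | h' := eq_or_ne t t'
    · exact hab t h
    · exact (hne t t' h').2.1 h
  · obtain rfl | h' := eq_or_ne t t'
    · exact hab t h.symm
    · exact (hne t t' h').2.2.1 h
  · exact (hne t t' htt').2.2.2 h

def rootCombination (a b : Fin N → Fin n) (c : Fin N → ℂ) : Fin n → ℂ :=
  ∑ t, c t • (eps n (a t) - eps n (b t))

variable {a b : Fin N → Fin n}

theorem rootCombination_apply (c : Fin N → ℂ) (j : Fin n) :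
    rootCombination a b c j = ∑ t, c t * (eps n (a t) j - eps n (b t) j) := by
  simp [rootCombination, Finset.sum_apply]

theorem rootCombination_apply_left (hinj : Injective (Sum.elim a b)) (c : Fin N → ℂ)
    (t : Fin N) : rootCombination a b c (a t) = c t := by
  have ha : ∀ t', a t = a t' ↔ t = t' := fun t' => by
    simpa using hinj.eq_iff (a := .inl t) (b := .inl t')
  have hb : ∀ t', a t ≠ b t' := fun t' h => by simpa using hinj (a₁ := .inl t) (a₂ := .inr t') h
  simp [rootCombination_apply, eps, ha, hb]

theorem rootCombination_apply_right (hinj : Injective (Sum.elim a b)) (c : Fin N → ℂ)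
    (t : Fin N) : rootCombination a b c (b t) = -c t := by
  have ha : ∀ t', b t ≠ a t' := fun t' h => by simpa using hinj (a₁ := .inr t) (a₂ := .inl t') h
  have hb : ∀ t', b t = b t' ↔ t = t' := fun t' => by
    simpa using hinj.eq_iff (a := .inr t) (b := .inr t')
  simp [rootCombination_apply, eps, ha, hb]

theorem rootCombination_apply_of_forall_ne {j : Fin n} (hj : ∀ u, Sum.elim a b u ≠ j)
    (c : Fin N → ℂ) : rootCombination a b c j = 0 := by
  have ha (t : Fin N) : j ≠ a t := (hj (.inl t)).symm
  have hb (t : Fin N) : j ≠ b t := (hj (.inr t)).symm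
  simp [rootCombination_apply, eps, ha, hb]

theorem rootCombination_intCast_mem (k : Fin N → ℤ) (j : Fin n) :
    rootCombination a b (fun t => k t) j ∈ AddSubgroup.zmultiples (1 : ℂ) := by
  rw [rootCombination_apply]
  have heps (i : Fin n) : eps n i j ∈ AddSubgroup.zmultiples (1 : ℂ) := by
    unfold eps
    split_ifs
    exacts [AddSubgroup.mem_zmultiples 1, zero_mem _]
  refine AddSubgroup.sum_mem _ fun t _ => ?_
  rw [← zsmul_eq_mul]
  exact zsmul_mem (sub_mem (heps _) (heps _)) _

theorem sum_rootCombination_apply (c : Fin N → ℂ) : ∑ j, rootCombination a b c j = 0 := by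
  simp only [rootCombination_apply]
  rw [Finset.sum_comm]
  simp [eps, ← Finset.mul_sum, sum_sub_distrib]

end Roots

section Approx

variable {n N : ℕ} {lam : Fin n → ℂ} {a b : Fin N → Fin n}

theorem map_univ_sub_rootCombination {H : Type*} [AddCommGroup H] (g : ℂ →+ H)
    (hinj : Injective (Sum.elim a b)) (hneg : ∀ t, lam (b t) = -lam (a t)) (c : Fin N → ℂ) :
    univ.val.map (g ∘ (lam - rootCombination a b c)) =
      symmPairs (fun t => g (lam (a t) - c t)) + (univ.map ⟨_, hinj⟩)ᶜ.val.map (g ∘ lam) := by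
  rw [map_univ_eq_symmPairs_add hinj]
  · congr 1
    · refine congrArg symmPairs (funext fun t => ?_)
      simp [rootCombination_apply_left hinj]
    · refine Multiset.map_congr rfl fun j hj => ?_
      simp only [Finset.mem_val, Finset.mem_compl, Finset.mem_map, Finset.mem_univ, true_and,
        Function.Embedding.coeFn_mk, not_exists] at hj
      simp [rootCombination_apply_of_forall_ne hj]
  · intro t
    rw [comp_apply, comp_apply, ← map_neg, Pi.sub_apply, Pi.sub_apply,
      rootCombination_apply_left hinj, rootCombination_apply_right hinj, hneg, neg_sub,
      sub_neg_eq_add, neg_add_eq_sub]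

theorem exists_int_map_univ_sub_rootCombination_eq (hinj : Injective (Sum.elim a b))
    (hneg : ∀ t, lam (b t) = -lam (a t)) {c : Fin N → ℂ}
    (hc : (univ.val.map (lam - rootCombination a b c)).map ((↑) : ℂ → ComplexModInt) =
      (univ.val.map lam).map (↑)) :
    ∃ k : Fin N → ℤ, univ.val.map (lam - rootCombination a b (fun t => k t)) =
      univ.val.map (lam - rootCombination a b c) := by
  let mk := QuotientAddGroup.mk' (AddSubgroup.zmultiples (1 : ℂ))
  have hmod : symmPairs (fun t => mk (lam (a t) - c t)) = symmPairs (fun t => mk (lam (a t))) := by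
    have h : univ.val.map (mk ∘ (lam - rootCombination a b c)) = univ.val.map (mk ∘ lam) := by
      simpa only [Multiset.map_map, mk, QuotientAddGroup.coe_mk'] using hc
    rw [map_univ_sub_rootCombination mk hinj hneg c,
      map_univ_eq_symmPairs_add hinj (v := mk ∘ lam) fun t => by simp [hneg]] at h
    exact add_right_cancel h
  obtain ⟨k, hk⟩ := exists_intCast_symmPairs_eq hmod
  have hid (d : Fin N → ℂ) := map_univ_sub_rootCombination (AddMonoidHom.id ℂ) hinj hneg d
  simp only [AddMonoidHom.coe_id, id_comp, id_eq] at hid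
  exact ⟨k, by rw [hid, hid, hk]⟩

theorem approx_of_forall_sub_eq_intCast {mu : Fin n → ℂ} (hint : ∀ i, ∃ m : ℤ, mu i - lam i = m)
    (hab : ∀ t, a t ≠ b t)
    (horth : ∀ t t', t ≠ t' →
      pform (eps n (a t) - eps n (b t)) (eps n (a t') - eps n (b t')) = 0)
    (hpair : ∀ t, pform lam (eps n (a t) + eps n (b t)) = 0) {w : Equiv.Perm (Fin n)}
    {c : Fin N → ℂ} (hmu : mu = (lam - rootCombination a b c) ∘ w) : approx n lam mu := by
  have hinj := injective_sumElim_of_pairwise_orthogonal hab horth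
  have hneg (t : Fin N) : lam (b t) = -lam (a t) := by
    have h := hpair t
    rw [pform_add_right, pform_eps_right, pform_eps_right] at h
    linear_combination h
  have hvals : univ.val.map mu = univ.val.map (lam - rootCombination a b c) := by
    rw [hmu, ← Multiset.map_map, Multiset.map_univ_val_equiv]
  have hmod : (univ.val.map (lam - rootCombination a b c)).map ((↑) : ℂ → ComplexModInt) =
      (univ.val.map lam).map (↑) := by
    rw [← hvals, Multiset.map_map, Multiset.map_map]
    exact Multiset.map_congr rfl fun i _ => ComplexModInt.mk_eq_mk_iff.mpr (hint i)
  obtain ⟨k, hk⟩ := exists_int_map_univ_sub_rootCombination_eq hinj hneg hmod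
  obtain ⟨σ, hσ⟩ := Equiv.Perm.exists_comp_eq_of_map_univ_eq (hvals.trans hk.symm)
  refine ⟨σ, mem_integralWeyl_iff.mpr fun i => ?_, N, a, b, k, hab, horth, hpair, hσ.symm⟩
  calc (lam (σ i) : ComplexModInt)
      = ((lam - rootCombination a b (fun t => k t)) (σ i) : ℂ) := by
        rw [Pi.sub_apply, QuotientAddGroup.mk_sub,
          (QuotientAddGroup.eq_zero_iff _).mpr (rootCombination_intCast_mem k _), sub_zero]
    _ = mu i := by rw [← hσ]; rfl
    _ = lam i := ComplexModInt.mk_eq_mk_iff.mpr (hint i)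

theorem exists_sub_eq_intCast_of_mem_integralWeyl {w : Equiv.Perm (Fin n)}
    (hw : w ∈ IntegralWeyl n lam) (k : Fin N → ℤ) (i : Fin n) :
    ∃ m : ℤ, ((lam - rootCombination a b (fun t => k t)) ∘ w) i - lam i = m := by
  rw [← ComplexModInt.mk_eq_mk_iff, comp_apply, Pi.sub_apply, QuotientAddGroup.mk_sub,
    (QuotientAddGroup.eq_zero_iff _).mpr (rootCombination_intCast_mem k _), sub_zero]
  exact mem_integralWeyl_iff.mp hw i

theorem sum_comp_sub_rootCombination_sub (c : Fin N → ℂ) (w : Equiv.Perm (Fin n)) :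
    ∑ i, (((lam - rootCombination a b c) ∘ w) i - lam i) = 0 := by
  rw [sum_sub_distrib]
  simp only [comp_apply]
  rw [Equiv.sum_comp w (lam - rootCombination a b c)]
  simp [sum_sub_distrib, sum_rootCombination_apply]

end Approx

theorem stmt0_general {n : ℕ} (lam mu : Fin n → ℂ) :
    (((∀ i : Fin n, ∃ m : ℤ, mu i - lam i = (m : ℂ)) ∧ ∑ i, (mu i - lam i) = 0) ∧
      ∃ (w : Equiv.Perm (Fin n)) (N : ℕ) (a b : Fin N → Fin n) (c : Fin N → ℂ),
        (∀ t, a t ≠ b t) ∧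
        (∀ t t', t ≠ t' →
          pform (eps n (a t) - eps n (b t)) (eps n (a t') - eps n (b t')) = 0) ∧
        (∀ t, pform lam (eps n (a t) + eps n (b t)) = 0) ∧
        mu = (lam - ∑ t, c t • (eps n (a t) - eps n (b t))) ∘ w)
    ↔ approx n lam mu := by
  constructor
  · rintro ⟨⟨hint, -⟩, w, N, a, b, c, hab, horth, hpair, hmu⟩
    exact approx_of_forall_sub_eq_intCast hint hab horth hpair hmu
  · rintro ⟨w, hw, N, a, b, k, hab, horth, hpair, rfl⟩
    exact ⟨⟨exists_sub_eq_intCast_of_mem_integralWeyl hw k, sum_comp_sub_rootCombination_sub _ w⟩,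
      w, N, a, b, _, hab, horth, hpair, rfl⟩

/-- For `λ` of standard block form and arbitrary `μ ∈ ℂ^n`, the following
are equivalent: (a) `μ - λ ∈ ℤΦ` (an integer vector with coordinate sum `0`) and
`μ = w(λ - ∑_j k_j α_j)` for some `w ∈ W`, complex numbers `k_j` and pairwise orthogonal
roots `α_j` with `(λ, ᾱ_j) = 0`; (b) `λ ≈ μ`, i.e. the same with `w ∈ W_λ` and `k_j ∈ ℤ`. -/
theorem stmt0 {n : ℕ} (lam mu : Fin n → ℂ) (hstd : Nonempty (StdBlockData n lam)) :
    (((∀ i : Fin n, ∃ m : ℤ, mu i - lam i = (m : ℂ)) ∧ ∑ i, (mu i - lam i) = 0) ∧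
      ∃ (w : Equiv.Perm (Fin n)) (N : ℕ) (a b : Fin N → Fin n) (c : Fin N → ℂ),
        (∀ t, a t ≠ b t) ∧
        (∀ t t', t ≠ t' →
          pform (eps n (a t) - eps n (b t)) (eps n (a t') - eps n (b t')) = 0) ∧
        (∀ t, pform lam (eps n (a t) + eps n (b t)) = 0) ∧
        mu = (lam - ∑ t, c t • (eps n (a t) - eps n (b t))) ∘ w)
    ↔ approx n lam mu :=
  stmt0_general lam mu

end
end

section
/- Let α = ε_i − ε_{i+1} be a simple positive root and define the star action of s_α on ℂ^n by s_α ∗ ζ := s_α ζ if (ζ, ᾱ) ≠ 0 and s_α ∗ ζ := s_α ζ − α if (ζ, ᾱ) = 0. Then for all ζ, ζ' ∈ ℂ^n one has s_α ∗ ζ ≈ s_α ∗ ζ' if and only if ζ ≈ ζ'. -/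
open Finset

open scoped Classical

noncomputable section

/-!
Write `λ ≈ μ` as `μ = (λ - v) ∘ w` with `w ∈ W_λ`, where the integral vector `v` is odd under an
involution `g` that pairs off coordinates `x ≠ g x` with `λ_x + λ_{g x} = 0`. In this form `≈` is
symmetric (`λ = (μ + v ∘ w) ∘ w⁻¹`) and invariant under simultaneous permutations. Moreover, if
`μ_i + μ_j = 0` then `λ ≈ μ` implies `λ ≈ μ + α` for `α = ε_i - ε_j`: either `w i` and `w j` form
a new pair, or `α` is absorbed into the coefficient of the pair of one of them, after swapping the
other one with the partner in that pair; this swap lies in `W_λ` because `λ - v` takes the same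
value at both points. Finally `s_α ∗ ζ = s_α ζ⁺`, where `ζ⁺ = ζ + α` if `(ζ, ᾱ) = 0` and `ζ⁺ = ζ`
otherwise, and `∗` is an involution; applying the previous step on both sides of `ζ ≈ ζ'` (with
symmetry in between) proves the equivalence.
-/

section

variable {n : ℕ} {lam mu v : Fin n → ℂ} {g : Fin n → Fin n} {i j : Fin n}

lemma pform_eps_add (f : Fin n → ℂ) (x y : Fin n) : pform f (eps n x + eps n y) = f x + f y := by
  simp [pform, eps, mul_add, Finset.sum_add_distrib]

lemma pform_eps_sub (f : Fin n → ℂ) (x y : Fin n) : pform f (eps n x - eps n y) = f x - f y := by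
  simp [pform, eps, mul_sub, Finset.sum_sub_distrib]

lemma ne_of_pform_root_root_eq_zero {a b c d : Fin n} (hab : a ≠ b) (hcd : c ≠ d)
    (h : pform (eps n a - eps n b) (eps n c - eps n d) = 0) :
    a ≠ c ∧ a ≠ d ∧ b ≠ c ∧ b ≠ d := by
  rw [pform_eps_sub] at h
  refine ⟨?_, ?_, ?_, ?_⟩ <;> rintro rfl <;> simp_all [eps, eq_comm] <;> split_ifs at h <;>
    norm_num at h

lemma pform_root_root_eq_zero {a b c d : Fin n} (hac : a ≠ c) (had : a ≠ d) (hbc : b ≠ c)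
    (hbd : b ≠ d) : pform (eps n a - eps n b) (eps n c - eps n d) = 0 := by
  simp [pform_eps_sub, eps, hac.symm, had.symm, hbc.symm, hbd.symm]

lemma eps_comp_perm (x : Fin n) (σ : Equiv.Perm (Fin n)) : eps n x ∘ σ = eps n (σ.symm x) := by
  ext t
  simp [eps, Equiv.eq_symm_apply]

lemma eps_comp_of_involutive (hg : Function.Involutive g) (x : Fin n) :
    eps n x ∘ g = eps n (g x) := by
  ext t
  simp [eps, hg.eq_iff]

lemma comp_swap_of_apply_eq {β : Type*} {f : Fin n → β} {x y : Fin n} (h : f x = f y) :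
    f ∘ Equiv.swap x y = f := by
  rw [Equiv.comp_swap_eq_update, h, Function.update_eq_self, ← h, Function.update_eq_self]

def integralVectors (n : ℕ) : AddSubgroup (Fin n → ℂ) :=
  AddSubgroup.pi Set.univ fun _ => (Int.castAddHom ℂ).range

lemma mem_integralVectors : v ∈ integralVectors n ↔ ∀ x, ∃ m : ℤ, (m : ℂ) = v x := by
  simp only [integralVectors, AddSubgroup.mem_pi, Set.mem_univ, true_implies,
    AddMonoidHom.mem_range, Int.coe_castAddHom]

lemma eps_mem_integralVectors (x : Fin n) : eps n x ∈ integralVectors n := by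
  rw [mem_integralVectors]
  intro t
  by_cases h : t = x <;> simp [eps, h]

lemma intCast_smul_sub_eps_mem_integralVectors (c : ℤ) (x y : Fin n) :
    (c : ℂ) • (eps n x - eps n y) ∈ integralVectors n := by
  rw [Int.cast_smul_eq_zsmul]
  exact zsmul_mem (sub_mem (eps_mem_integralVectors x) (eps_mem_integralVectors y)) c

lemma swap_mem_integralWeyl {x y : Fin n} (h : ∃ m : ℤ, lam x - lam y = m) :
    Equiv.swap x y ∈ IntegralWeyl n lam := by
  rcases eq_or_ne x y with rfl | hxy
  · rw [Equiv.swap_self]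
    exact one_mem _
  · exact Subgroup.subset_closure ⟨x, y, hxy, h, rfl⟩

lemma integralWeyl_le_sub (hv : v ∈ integralVectors n) :
    IntegralWeyl n lam ≤ IntegralWeyl n (lam - v) := by
  refine Subgroup.closure_mono ?_
  rintro _ ⟨x, y, hxy, ⟨m, hm⟩, rfl⟩
  obtain ⟨a, ha⟩ := mem_integralVectors.1 hv x
  obtain ⟨b, hb⟩ := mem_integralVectors.1 hv y
  refine ⟨x, y, hxy, ⟨m - a + b, ?_⟩, rfl⟩
  push_cast
  simp only [Pi.sub_apply, ← ha, ← hb]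
  linear_combination hm

lemma conj_mem_integralWeyl_comp (σ : Equiv.Perm (Fin n)) {w : Equiv.Perm (Fin n)}
    (hw : w ∈ IntegralWeyl n lam) : σ⁻¹ * w * σ ∈ IntegralWeyl n (lam ∘ σ) := by
  have hmap : (IntegralWeyl n lam).map (MulAut.conj σ⁻¹).toMonoidHom ≤
      IntegralWeyl n (lam ∘ σ) := by
    rw [IntegralWeyl, MonoidHom.map_closure, Subgroup.closure_le]
    rintro _ ⟨_, ⟨x, y, hxy, ⟨m, hm⟩, rfl⟩, rfl⟩
    refine Subgroup.subset_closure ⟨σ⁻¹ x, σ⁻¹ y, by simpa using hxy, ⟨m, by simpa using hm⟩, ?_⟩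
    rw [Equiv.swap_apply_apply]
    simp
  simpa using hmap (Subgroup.mem_map_of_mem _ hw)

/-- The shift `v = ∑ k_t (ε_{a_t} - ε_{b_t})` of `approx`, with the pairs `{a_t, b_t}` encoded by
the involution `g` exchanging `a_t` and `b_t` and fixing all other coordinates. -/
structure IsRootShift (lam v : Fin n → ℂ) (g : Fin n → Fin n) : Prop where
  integral : v ∈ integralVectors n
  involutive : Function.Involutive g
  add_eq_zero : ∀ x, g x ≠ x → lam x + lam (g x) = 0
  comp_eq_neg : v ∘ g = -v

namespace IsRootShift

lemma apply_eq_zero (h : IsRootShift lam v g) {x : Fin n} (hx : g x = x) : v x = 0 := by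
  have hneg : v x = -v x := by simpa [hx] using congrFun h.comp_eq_neg x
  exact CharZero.eq_neg_self_iff.1 hneg

lemma comp (h : IsRootShift lam v g) (σ : Equiv.Perm (Fin n)) :
    IsRootShift (lam ∘ σ) (v ∘ σ) (σ.symm ∘ g ∘ σ) where
  integral := mem_integralVectors.2 fun x => mem_integralVectors.1 h.integral (σ x)
  involutive x := by simp [h.involutive (σ x)]
  add_eq_zero x hx := by
    simpa using h.add_eq_zero (σ x) fun e => hx (by simp [e])
  comp_eq_neg := by
    ext x
    simpa using congrFun h.comp_eq_neg (σ x)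

lemma sub (h : IsRootShift lam v g) : IsRootShift (lam - v) (-v) g where
  integral := neg_mem h.integral
  involutive := h.involutive
  add_eq_zero x hx := by
    have hvg : v (g x) = -v x := congrFun h.comp_eq_neg x
    simp only [Pi.sub_apply]
    linear_combination h.add_eq_zero x hx - hvg
  comp_eq_neg := by rw [Pi.neg_comp, h.comp_eq_neg]

lemma sub_smul_root (h : IsRootShift lam v g) (c : ℤ) (x : Fin n) :
    IsRootShift lam (v - (c : ℂ) • (eps n x - eps n (g x))) g where
  integral := sub_mem h.integral (intCast_smul_sub_eps_mem_integralVectors c x (g x))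
  involutive := h.involutive
  add_eq_zero := h.add_eq_zero
  comp_eq_neg := by
    rw [Pi.sub_comp, Pi.smul_comp, Pi.sub_comp, eps_comp_of_involutive h.involutive,
      eps_comp_of_involutive h.involutive, h.involutive x, h.comp_eq_neg]
    module

lemma swap_comp_sub_smul_root (h : IsRootShift lam v g) {p q : Fin n} (hpq : p ≠ q)
    (hp : g p = p) (hq : g q = q) (hlam : lam p + lam q = 0) (c : ℤ) :
    IsRootShift lam (v - (c : ℂ) • (eps n p - eps n q)) (Equiv.swap p q ∘ g) := by
  have hfix : ∀ x, x ≠ p → x ≠ q → g x ≠ p ∧ g x ≠ q := fun x hxp hxq =>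
    ⟨fun e => hxp (by rw [← h.involutive x, e, hp]),
      fun e => hxq (by rw [← h.involutive x, e, hq])⟩
  have hcomm : ∀ x, g (Equiv.swap p q x) = Equiv.swap p q (g x) := by
    intro x
    rcases eq_or_ne x p with rfl | hxp
    · simp [hp, hq]
    rcases eq_or_ne x q with rfl | hxq
    · simp [hp, hq]
    obtain ⟨hgp, hgq⟩ := hfix x hxp hxq
    rw [Equiv.swap_apply_of_ne_of_ne hxp hxq, Equiv.swap_apply_of_ne_of_ne hgp hgq]
  refine ⟨sub_mem h.integral (intCast_smul_sub_eps_mem_integralVectors c p q), ?_, ?_, ?_⟩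
  · intro x
    simp [hcomm, h.involutive x]
  · intro x hx
    rcases eq_or_ne x p with rfl | hxp
    · simpa [hp] using hlam
    rcases eq_or_ne x q with rfl | hxq
    · simpa [hq, add_comm] using hlam
    obtain ⟨hgp, hgq⟩ := hfix x hxp hxq
    simp only [Function.comp_apply, Equiv.swap_apply_of_ne_of_ne hgp hgq] at hx ⊢
    exact h.add_eq_zero x hx
  · have hv : v ∘ Equiv.swap p q = v := by
      apply comp_swap_of_apply_eq
      rw [h.apply_eq_zero hp, h.apply_eq_zero hq]
    rw [← Function.comp_assoc, Pi.sub_comp, Pi.sub_comp, hv, h.comp_eq_neg, Pi.smul_comp,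
      Pi.smul_comp, Pi.sub_comp, Pi.sub_comp, eps_comp_perm, eps_comp_perm,
      eps_comp_of_involutive h.involutive, eps_comp_of_involutive h.involutive]
    simp [hp, hq]
    module

lemma sum_filter_lt_smul (h : IsRootShift lam v g) :
    ∑ x with x < g x, v x • (eps n x - eps n (g x)) = v := by
  ext y
  have hy x : y = g x ↔ g y = x := by rw [eq_comm, h.involutive.eq_iff, eq_comm]
  simp only [Finset.sum_apply, Pi.smul_apply, Pi.sub_apply, eps, smul_eq_mul, mul_sub, mul_ite,
    mul_one, mul_zero, Finset.sum_sub_distrib, hy, Finset.sum_ite_eq, Finset.mem_filter,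
    Finset.mem_univ, true_and, h.involutive y]
  rcases lt_trichotomy y (g y) with hlt | heq | hgt
  · simp [hlt, hlt.not_gt]
  · simp [← heq, h.apply_eq_zero heq.symm]
  · have hvg : v (g y) = -v y := congrFun h.comp_eq_neg y
    simp [hgt, hgt.not_gt, hvg]

lemma exists_pairs (h : IsRootShift lam v g) :
    ∃ (N : ℕ) (a b : Fin N → Fin n) (k : Fin N → ℤ),
      (∀ t, a t ≠ b t) ∧
      (∀ t t', t ≠ t' →
        pform (eps n (a t) - eps n (b t)) (eps n (a t') - eps n (b t')) = 0) ∧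
      (∀ t, pform lam (eps n (a t) + eps n (b t)) = 0) ∧
      v = ∑ t, (k t : ℂ) • (eps n (a t) - eps n (b t)) := by
  choose k hk using mem_integralVectors.1 h.integral
  let e := (Fintype.equivFin {x // x < g x}).symm
  have hlt t : (e t : Fin n) < g (e t) := (e t).2
  have hne t t' : (e t : Fin n) ≠ g (e t') := by
    intro heq
    have hlt₁ := hlt t
    have hlt₂ := hlt t'
    rw [show g (e t) = e t' by rw [heq, h.involutive]] at hlt₁
    rw [← heq] at hlt₂
    exact lt_asymm hlt₁ hlt₂
  refine ⟨_, fun t => e t, fun t => g (e t), fun t => k (e t), fun t => (hlt t).ne, ?_, ?_, ?_⟩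
  · intro t t' htt
    refine pform_root_root_eq_zero (fun heq => htt (e.injective (Subtype.ext heq))) (hne t t')
      (fun heq => hne t' t heq.symm) fun heq => htt (e.injective (Subtype.ext ?_))
    exact h.involutive.injective heq
  · intro t
    rw [pform_eps_add]
    exact h.add_eq_zero _ (hlt t).ne'
  · simp only [hk]
    rw [e.sum_comp (fun x => v x • (eps n x - eps n (g x))),
      ← Finset.sum_subtype (f := fun x => v x • (eps n x - eps n (g x)))
        {x | x < g x} (fun x => by simp),
      h.sum_filter_lt_smul]

end IsRootShift

open Function in
lemma exists_isRootShift_sum {N : ℕ} {a b : Fin N → Fin n} (k : Fin N → ℤ)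
    (hab : ∀ t, a t ≠ b t)
    (horth : ∀ t t', t ≠ t' →
      pform (eps n (a t) - eps n (b t)) (eps n (a t') - eps n (b t')) = 0)
    (hlam : ∀ t, pform lam (eps n (a t) + eps n (b t)) = 0) :
    ∃ g, IsRootShift lam (∑ t, (k t : ℂ) • (eps n (a t) - eps n (b t))) g := by
  have hdisj : ∀ t t', t ≠ t' → a t ≠ a t' ∧ a t ≠ b t' ∧ b t ≠ a t' ∧ b t ≠ b t' :=
    fun t t' htt => ne_of_pform_root_root_eq_zero (hab t) (hab t') (horth t t' htt)
  have he : Injective (Sum.elim a b) := by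
    refine Injective.sumElim (fun t t' e => ?_) (fun t t' e => ?_) fun t t' e => ?_
    · by_contra htt
      exact (hdisj t t' htt).1 e
    · by_contra htt
      exact (hdisj t t' htt).2.2.2 e
    · rcases eq_or_ne t t' with rfl | htt
      · exact hab t e
      · exact (hdisj t t' htt).2.1 e
  set g := extend (Sum.elim a b) (Sum.elim a b ∘ Sum.swap) id
  have hga t : g (a t) = b t := he.extend_apply _ _ (Sum.inl t)
  have hgb t : g (b t) = a t := he.extend_apply _ _ (Sum.inr t)
  have hcases x : (∃ t, x = a t) ∨ (∃ t, x = b t) ∨ g x = x := by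
    by_contra! hx
    refine hx.2.2 (extend_apply' _ _ _ ?_)
    rintro ⟨t | t, rfl⟩
    exacts [hx.1 t rfl, hx.2.1 t rfl]
  have hinv : Involutive g := by
    intro x
    rcases hcases x with ⟨t, rfl⟩ | ⟨t, rfl⟩ | hx
    exacts [by rw [hga, hgb], by rw [hgb, hga], by rw [hx, hx]]
  refine ⟨g, sum_mem fun t _ => intCast_smul_sub_eps_mem_integralVectors _ _ _, hinv, ?_, ?_⟩
  · intro x hx
    rcases hcases x with ⟨t, rfl⟩ | ⟨t, rfl⟩ | hx'
    · simpa [hga, pform_eps_add] using hlam t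
    · simpa [hgb, pform_eps_add, add_comm] using hlam t
    · exact absurd hx' hx
  · have hroot t : (eps n (a t) - eps n (b t)) ∘ g = -(eps n (a t) - eps n (b t)) := by
      rw [Pi.sub_comp, eps_comp_of_involutive hinv, eps_comp_of_involutive hinv, hga, hgb,
        neg_sub]
    ext x
    have hroot_apply := fun t => congrFun (hroot t) x
    simp only [Function.comp_apply, Pi.neg_apply] at hroot_apply
    simp only [Finset.sum_apply, Function.comp_apply, Pi.smul_apply, hroot_apply, Pi.neg_apply,
      smul_neg, Finset.sum_neg_distrib]

lemma approx_iff :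
    approx n lam mu ↔
      ∃ w ∈ IntegralWeyl n lam, ∃ v g, IsRootShift lam v g ∧ mu = (lam - v) ∘ w := by
  constructor
  · rintro ⟨w, hw, N, a, b, k, hab, horth, hlam, rfl⟩
    obtain ⟨g, hg⟩ := exists_isRootShift_sum k hab horth hlam
    exact ⟨w, hw, _, g, hg, rfl⟩
  · rintro ⟨w, hw, v, g, hv, rfl⟩
    obtain ⟨N, a, b, k, hab, horth, hlam, rfl⟩ := hv.exists_pairs
    exact ⟨w, hw, N, a, b, k, hab, horth, hlam, rfl⟩

lemma approx_symm (h : approx n lam mu) : approx n mu lam := by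
  obtain ⟨w, hw, v, g, hv, rfl⟩ := approx_iff.1 h
  have hw' : w ∈ IntegralWeyl n ((lam - v) ∘ w) := by
    simpa using conj_mem_integralWeyl_comp w (integralWeyl_le_sub hv.integral hw)
  refine approx_iff.2 ⟨w⁻¹, inv_mem hw', _, _, hv.sub.comp w, ?_⟩
  ext x
  simp

lemma approx_comp_perm (σ : Equiv.Perm (Fin n)) (h : approx n lam mu) :
    approx n (lam ∘ σ) (mu ∘ σ) := by
  obtain ⟨w, hw, v, g, hv, rfl⟩ := approx_iff.1 h
  refine approx_iff.2 ⟨σ⁻¹ * w * σ, conj_mem_integralWeyl_comp σ hw, _, _, hv.comp σ, ?_⟩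
  ext x
  simp

lemma approx_comp_of_mem {τ : Equiv.Perm (Fin n)} (h : approx n lam mu)
    (hτ : τ ∈ IntegralWeyl n lam) : approx n lam (mu ∘ τ) := by
  obtain ⟨w, hw, v, g, hv, rfl⟩ := approx_iff.1 h
  exact approx_iff.2 ⟨w * τ, mul_mem hw hτ, v, g, hv, rfl⟩

namespace IsRootShift

lemma approx_add_smul_root_of_apply_ne (hv : IsRootShift lam v g) {p q : Fin n} (hqp : q ≠ p)
    (hp : g p ≠ p) (hsum : (lam - v) p + (lam - v) q = 0) (c : ℤ) :
    approx n lam (lam - v + (c : ℂ) • (eps n p - eps n q)) := by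
  have hvP : v (g p) = -v p := congrFun hv.comp_eq_neg p
  have hlamP := hv.add_eq_zero p hp
  have hqP : (lam - v) q = (lam - v) (g p) := by
    simp only [Pi.sub_apply] at hsum ⊢
    linear_combination hsum - hlamP + hvP
  have hτ : Equiv.swap q (g p) ∈ IntegralWeyl n lam := by
    obtain ⟨a, ha⟩ := mem_integralVectors.1 hv.integral p
    obtain ⟨b, hb⟩ := mem_integralVectors.1 hv.integral q
    refine swap_mem_integralWeyl ⟨a + b, ?_⟩
    simp only [Pi.sub_apply] at hsum
    push_cast
    linear_combination hsum - hlamP - ha - hb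
  refine approx_iff.2 ⟨Equiv.swap q (g p), hτ, _, g, hv.sub_smul_root c p, ?_⟩
  rw [show lam - (v - (c : ℂ) • (eps n p - eps n (g p))) =
      (lam - v) + (c : ℂ) • (eps n p - eps n (g p)) by abel,
    Pi.add_comp, comp_swap_of_apply_eq hqP, Pi.smul_comp, Pi.sub_comp, eps_comp_perm,
    eps_comp_perm, Equiv.symm_swap, Equiv.swap_apply_of_ne_of_ne hqp.symm (Ne.symm hp),
    Equiv.swap_apply_right]

lemma approx_add_smul_root (hv : IsRootShift lam v g) {p q : Fin n} (hpq : p ≠ q)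
    (hsum : (lam - v) p + (lam - v) q = 0) (c : ℤ) :
    approx n lam (lam - v + (c : ℂ) • (eps n p - eps n q)) := by
  by_cases hp : g p = p
  · by_cases hq : g q = q
    · have hlam : lam p + lam q = 0 := by
        simpa [hv.apply_eq_zero hp, hv.apply_eq_zero hq] using hsum
      refine approx_iff.2 ⟨1, one_mem _, _, _, hv.swap_comp_sub_smul_root hpq hp hq hlam c, ?_⟩
      rw [Equiv.Perm.coe_one, Function.comp_id]
      abel
    · convert hv.approx_add_smul_root_of_apply_ne hpq hq (by linear_combination hsum) (-c)
        using 2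
      push_cast
      module
  · exact hv.approx_add_smul_root_of_apply_ne hpq.symm hp hsum c

end IsRootShift

lemma approx_add_root (h : approx n lam mu) (hij : i ≠ j) (hmu : mu i + mu j = 0) :
    approx n lam (mu + (eps n i - eps n j)) := by
  obtain ⟨w, hw, v, g, hv, rfl⟩ := approx_iff.1 h
  convert approx_comp_of_mem (hv.approx_add_smul_root (w.injective.ne hij) hmu 1) hw using 1
  simp only [Pi.add_comp, Pi.sub_comp, eps_comp_perm, Equiv.symm_apply_apply, Int.cast_one,
    one_smul]

def starAct (i j : Fin n) (ζ : Fin n → ℂ) : Fin n → ℂ :=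
  if pform ζ (eps n i + eps n j) ≠ 0 then ζ ∘ Equiv.swap i j
  else ζ ∘ Equiv.swap i j - (eps n i - eps n j)

def wallShift (i j : Fin n) (ζ : Fin n → ℂ) : Fin n → ℂ :=
  if pform ζ (eps n i + eps n j) = 0 then ζ + (eps n i - eps n j) else ζ

lemma root_comp_swap : (eps n i - eps n j) ∘ Equiv.swap i j = -(eps n i - eps n j) := by
  rw [Pi.sub_comp, eps_comp_perm, eps_comp_perm, Equiv.symm_swap, Equiv.swap_apply_left,
    Equiv.swap_apply_right, neg_sub]

lemma starAct_eq_wallShift_comp (ζ : Fin n → ℂ) :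
    starAct i j ζ = wallShift i j ζ ∘ Equiv.swap i j := by
  by_cases h0 : pform ζ (eps n i + eps n j) = 0
  · rw [starAct, wallShift, if_neg (not_not.2 h0), if_pos h0, Pi.add_comp, root_comp_swap,
      sub_eq_add_neg]
  · rw [starAct, wallShift, if_pos h0, if_neg h0]

lemma pform_wallShift_comp_swap (hij : i ≠ j) (ζ : Fin n → ℂ) :
    pform (wallShift i j ζ ∘ Equiv.swap i j) (eps n i + eps n j) =
      pform ζ (eps n i + eps n j) := by
  simp only [pform_eps_add, Function.comp_apply, Equiv.swap_apply_left, Equiv.swap_apply_right,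
    wallShift]
  split_ifs
  · simp [eps, hij, hij.symm]
    ring
  · exact add_comm _ _

lemma starAct_starAct (hij : i ≠ j) (ζ : Fin n → ℂ) : starAct i j (starAct i j ζ) = ζ := by
  rw [starAct_eq_wallShift_comp, starAct_eq_wallShift_comp]
  by_cases h0 : pform ζ (eps n i + eps n j) = 0
  · have h1 := (pform_wallShift_comp_swap hij ζ).trans h0
    rw [wallShift, if_pos h1, wallShift, if_pos h0]
    ext x
    have hα := congrFun (root_comp_swap (i := i) (j := j)) x
    simp only [Function.comp_apply, Pi.add_apply, Pi.neg_apply, Equiv.swap_apply_self] at hα ⊢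
    rw [hα]
    ring
  · have h1 := (pform_wallShift_comp_swap hij ζ).trans_ne h0
    rw [wallShift, if_neg h1, wallShift, if_neg h0]
    ext x
    simp

lemma approx_wallShift (h : approx n lam mu) (hij : i ≠ j) : approx n lam (wallShift i j mu) := by
  unfold wallShift
  split_ifs with hmu
  · exact approx_add_root h hij (by rwa [pform_eps_add] at hmu)
  · exact h

lemma approx_starAct {ζ ζ' : Fin n → ℂ} (hij : i ≠ j) (h : approx n ζ ζ') :
    approx n (starAct i j ζ) (starAct i j ζ') := by
  rw [starAct_eq_wallShift_comp, starAct_eq_wallShift_comp]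
  exact approx_comp_perm _ <|
    approx_symm <| approx_wallShift (approx_symm (approx_wallShift h hij)) hij

end

/-- For a simple root `α = ε_i - ε_{i+1}` and the star action
`s_α ∗ ζ = s_α ζ` if `(ζ, ᾱ) ≠ 0` and `s_α ∗ ζ = s_α ζ - α` otherwise, we have
`s_α ∗ ζ ≈ s_α ∗ ζ'` if and only if `ζ ≈ ζ'`. -/
theorem stmt1 {n : ℕ} (i : Fin n) (h : i.val + 1 < n) (zeta zeta' : Fin n → ℂ) :
    let j : Fin n := ⟨i.val + 1, h⟩
    let α : Fin n → ℂ := eps n i - eps n j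
    let star : (Fin n → ℂ) → (Fin n → ℂ) := fun ζ =>
      if pform ζ (eps n i + eps n j) ≠ 0 then ζ ∘ Equiv.swap i j
      else ζ ∘ Equiv.swap i j - α
    (approx n (star zeta) (star zeta') ↔ approx n zeta zeta') := by
  intro j α star
  have hij : i ≠ j := Fin.ne_of_val_ne (by simp [j])
  show approx n (starAct i j zeta) (starAct i j zeta') ↔ approx n zeta zeta'
  exact ⟨fun h' => by simpa only [starAct_starAct hij] using approx_starAct hij h',
    approx_starAct hij⟩

end
end

section
/- Let s ∈ ℂ with 2s ∉ ℤ, 0 ≤ ℓ ≤ n, and let λ ∈ Λ⁺_{s^ℓ}(n) with ♯λ = 1; let (p,q) with p ≤ ℓ < q be the unique pair with λ_p + λ_q = 0 and set α = ε_p − ε_q. Then: (i) there exist a positive integer k and σ ∈ S_n with σ(λ − kα) ∈ Λ⁺_{s^ℓ}(n); (ii) for the smallest such k, the element λ⁻ := σ(λ − kα) ∈ Λ⁺_{s^ℓ}(n) does not depend on the choice of σ; (iii) ♯λ⁻ = 1; (iv) λ ≈ λ⁻. -/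
open Finset

noncomputable section

/-- Membership in `Λ_{s^ℓ}(n)` (indices written `0`-based: the first `ℓ` coordinates are
congruent to `s` mod `ℤ`, the remaining ones to `-s`). -/
def InLambda (n ℓ : ℕ) (s : ℂ) (lam : Fin n → ℂ) : Prop :=
  ∀ i : Fin n, (i.val < ℓ → ∃ m : ℤ, lam i - s = (m : ℂ)) ∧
    (ℓ ≤ i.val → ∃ m : ℤ, lam i + s = (m : ℂ))

/-- Membership in `Λ⁺_{s^ℓ}(n)`: membership in `Λ_{s^ℓ}(n)` together with
`λ_i - λ_{i+1} ∈ ℤ_{>0}` for consecutive indices inside `{1,…,ℓ}` or inside `{ℓ+1,…,n}`. -/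
def InLambdaPlus (n ℓ : ℕ) (s : ℂ) (lam : Fin n → ℂ) : Prop :=
  InLambda n ℓ s lam ∧
    ∀ i : Fin n, ∀ h : i.val + 1 < n,
      (i.val + 1 < ℓ ∨ ℓ ≤ i.val) → ∃ m : ℤ, 0 < m ∧ lam i - lam ⟨i.val + 1, h⟩ = (m : ℂ)

open scoped Classical in
/-- The atypicality degree `♯λ`: the number of pairs `(i,j)` with `i ≤ ℓ < j`
(`1`-based) and `λ_i + λ_j = 0`. -/
def atyp (n ℓ : ℕ) (lam : Fin n → ℂ) : ℕ :=
  ((Finset.univ : Finset (Fin n × Fin n)).filter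
    (fun pq => pq.1.val < ℓ ∧ ℓ ≤ pq.2.val ∧ lam pq.1 + lam pq.2 = 0)).card

/-!
Subtracting `kα` changes only `λ_p` and `λ_q`, by integers, so `λ - kα` stays in `Λ_{s^ℓ}(n)`;
it can be permuted into `Λ⁺_{s^ℓ}(n)` as soon as it is injective on each of the two blocks
`{i < ℓ}` and `{i ≥ ℓ}` (sort each block by decreasing real part). Injectivity fails for at most
`2n` values of `k`, since every other coordinate collides with `λ_p - k` or `λ_q + k` for at most
one `k`. Because `2s ∉ ℤ`, a permutation carrying a vector of `Λ_{s^ℓ}(n)` into `Λ_{s^ℓ}(n)`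
preserves the blocks; hence it lies in `W_λ`, and the sorting permutation is unique. Finally
`(λ_p - k) + (λ_q + k) = 0`, and injectivity on blocks rules out any other atypical pair.
-/

def PreservesBlocks {n : ℕ} (ℓ : ℕ) (σ : Equiv.Perm (Fin n)) : Prop :=
  ∀ i, (σ i).val < ℓ ↔ i.val < ℓ

def BlockInjective {n : ℕ} (ℓ : ℕ) (f : Fin n → ℂ) : Prop :=
  ∀ i j : Fin n, (i.val < ℓ ↔ j.val < ℓ) → f i = f j → i = j

/-- `Λ⁺_{s^ℓ}(n)` consists of the block-injective elements of `Λ_{s^ℓ}(n)` along which this key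
increases: first the block, then the real part in decreasing order. -/
def blockKey {n : ℕ} (ℓ : ℕ) (f : Fin n → ℂ) (i : Fin n) : ℕ ×ₗ ℝ :=
  toLex (if i.val < ℓ then 0 else 1, -(f i).re)

section Blocks

variable {n ℓ : ℕ} {s : ℂ} {f g : Fin n → ℂ} {σ τ : Equiv.Perm (Fin n)}

theorem PreservesBlocks.le_iff (hσ : PreservesBlocks ℓ σ) (i : Fin n) :
    ℓ ≤ (σ i).val ↔ ℓ ≤ i.val := by
  simpa only [not_lt] using (hσ i).not

theorem PreservesBlocks.symm (hσ : PreservesBlocks ℓ σ) : PreservesBlocks ℓ σ.symm := fun i => by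
  simpa using (hσ (σ.symm i)).symm

theorem PreservesBlocks.blockKey_comp (hσ : PreservesBlocks ℓ σ) (f : Fin n → ℂ) :
    blockKey ℓ f ∘ σ = blockKey ℓ (f ∘ σ) := by
  funext i
  simp [blockKey, hσ i]

theorem BlockInjective.comp (hf : BlockInjective ℓ f) (hσ : PreservesBlocks ℓ σ) :
    BlockInjective ℓ (f ∘ σ) := fun i j hij he =>
  σ.injective (hf _ _ (by rw [hσ, hσ]; exact hij) he)

theorem BlockInjective.of_comp (hf : BlockInjective ℓ (f ∘ σ)) (hσ : PreservesBlocks ℓ σ) :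
    BlockInjective ℓ f := by
  simpa [Function.comp_assoc] using hf.comp hσ.symm

theorem InLambda.comp (hf : InLambda n ℓ s f) (hσ : PreservesBlocks ℓ σ) :
    InLambda n ℓ s (f ∘ σ) := fun i => by
  simpa only [Function.comp_apply, hσ i, hσ.le_iff i] using hf (σ i)

theorem InLambda.exists_int_sub (hf : InLambda n ℓ s f) {i j : Fin n}
    (hij : i.val < ℓ ↔ j.val < ℓ) : ∃ m : ℤ, f i - f j = m := by
  by_cases hi : i.val < ℓ
  · obtain ⟨a, ha⟩ := (hf i).1 hi
    obtain ⟨b, hb⟩ := (hf j).1 (hij.1 hi)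
    exact ⟨a - b, by push_cast; linear_combination ha - hb⟩
  · obtain ⟨a, ha⟩ := (hf i).2 (not_lt.1 hi)
    obtain ⟨b, hb⟩ := (hf j).2 (not_lt.1 (mt hij.2 hi))
    exact ⟨a - b, by push_cast; linear_combination ha - hb⟩

theorem InLambda.of_exists_int_sub (hf : InLambda n ℓ s f)
    (hg : ∀ i, ∃ m : ℤ, g i - f i = m) : InLambda n ℓ s g := fun i => by
  obtain ⟨m, hm⟩ := hg i
  refine ⟨fun hi => ?_, fun hi => ?_⟩
  · obtain ⟨a, ha⟩ := (hf i).1 hi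
    exact ⟨a + m, by push_cast; linear_combination ha + hm⟩
  · obtain ⟨a, ha⟩ := (hf i).2 hi
    exact ⟨a + m, by push_cast; linear_combination ha + hm⟩

theorem InLambda.preservesBlocks (hs : ∀ m : ℤ, 2 * s ≠ m) (hf : InLambda n ℓ s f)
    (hfσ : InLambda n ℓ s (f ∘ σ)) : PreservesBlocks ℓ σ := by
  intro i
  constructor
  · intro hσi
    by_contra hi
    obtain ⟨a, ha⟩ := (hf (σ i)).1 hσi
    obtain ⟨b, hb⟩ : ∃ b : ℤ, f (σ i) + s = b := (hfσ i).2 (not_lt.1 hi)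
    exact hs (b - a) (by push_cast; linear_combination hb - ha)
  · intro hi
    by_contra hσi
    obtain ⟨a, ha⟩ : ∃ a : ℤ, f (σ i) - s = a := (hfσ i).1 hi
    obtain ⟨b, hb⟩ := (hf (σ i)).2 (not_lt.1 hσi)
    exact hs (b - a) (by push_cast; linear_combination hb - ha)

theorem InLambdaPlus.strictMono_blockKey (hg : InLambdaPlus n ℓ s g) :
    StrictMono (blockKey ℓ g) := by
  cases n with
  | zero => exact fun i => i.elim0
  | succ n =>
    refine Fin.strictMono_iff_lt_succ.2 fun i => ?_
    simp only [blockKey, Prod.Lex.toLex_lt_toLex, Fin.val_castSucc, Fin.val_succ]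
    by_cases hside : i.val + 1 < ℓ ∨ ℓ ≤ i.val
    · obtain ⟨m, hm, he⟩ : ∃ m : ℤ, 0 < m ∧ g i.castSucc - g i.succ = m :=
        hg.2 i.castSucc (by simp) hside
      have hre : (g i.castSucc).re - (g i.succ).re = m := by
        simpa using congrArg Complex.re he
      right
      refine ⟨by split_ifs <;> omega, ?_⟩
      have : (0 : ℝ) < m := by exact_mod_cast hm
      linarith
    · left
      split_ifs <;> omega

theorem InLambdaPlus.blockInjective (hg : InLambdaPlus n ℓ s g) : BlockInjective ℓ g :=
  fun i j hij he => hg.strictMono_blockKey.injective (by simp [blockKey, he, hij])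

theorem InLambda.inLambdaPlus_of_monotone (hg : InLambda n ℓ s g) (hinj : BlockInjective ℓ g)
    (hmono : Monotone (blockKey ℓ g)) : InLambdaPlus n ℓ s g := by
  refine ⟨hg, fun i hi hside => ?_⟩
  set j : Fin n := ⟨i.val + 1, hi⟩
  have hij : i.val < ℓ ↔ j.val < ℓ := by simp only [j]; omega
  obtain ⟨m, hm⟩ := hg.exists_int_sub hij
  have hle := hmono (show i ≤ j from Fin.le_def.2 (Nat.le_succ _))
  simp only [blockKey, Prod.Lex.toLex_le_toLex] at hle
  have hre : (g i).re - (g j).re = m := by simpa using congrArg Complex.re hm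
  have hm0 : m ≠ 0 := by
    rintro rfl
    have := hinj i j hij (sub_eq_zero.1 (by simpa using hm))
    simp [j, Fin.ext_iff] at this
  have : (0 : ℝ) ≤ m := by
    rcases hle with hlt | ⟨-, hle⟩
    · split_ifs at hlt <;> omega
    · linarith
  exact ⟨m, lt_of_le_of_ne (by exact_mod_cast this) (Ne.symm hm0), hm⟩

theorem InLambda.exists_perm_inLambdaPlus (hf : InLambda n ℓ s f) (hinj : BlockInjective ℓ f) :
    ∃ σ : Equiv.Perm (Fin n), InLambdaPlus n ℓ s (f ∘ σ) := by
  set σ := Tuple.sort (blockKey ℓ f)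
  have hmono : Monotone (blockKey ℓ f ∘ σ) := Tuple.monotone_sort _
  have hblocks : PreservesBlocks ℓ σ := by
    have h := Tuple.unique_monotone (f := fun i : Fin n => if i.val < ℓ then 0 else 1)
      (σ := σ) (τ := 1) (Prod.Lex.monotone_fst_ofLex.comp hmono)
      (fun i j hij => by
        dsimp only [Function.comp_apply, Equiv.Perm.coe_one, id]
        split_ifs <;> omega)
    intro i
    have := congrFun h i
    simp only [Function.comp_apply, Equiv.Perm.coe_one, id] at this
    split_ifs at this <;> exact ⟨fun _ => by omega, fun _ => by omega⟩
  rw [hblocks.blockKey_comp] at hmono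
  exact ⟨σ, (hf.comp hblocks).inLambdaPlus_of_monotone (hinj.comp hblocks) hmono⟩

theorem InLambdaPlus.perm_eq (hs : ∀ m : ℤ, 2 * s ≠ m) (hσ : InLambdaPlus n ℓ s (f ∘ σ))
    (hτ : InLambdaPlus n ℓ s (f ∘ τ)) : τ = σ := by
  have hcomp : (f ∘ σ) ∘ ⇑(σ⁻¹ * τ) = f ∘ τ := by
    funext i; simp
  have hblocks : PreservesBlocks ℓ (σ⁻¹ * τ) := hσ.1.preservesBlocks hs (hcomp ▸ hτ.1)
  have hkey := Tuple.unique_monotone (f := blockKey ℓ (f ∘ σ)) (σ := σ⁻¹ * τ) (τ := 1)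
    (by rw [hblocks.blockKey_comp, hcomp]; exact hτ.strictMono_blockKey.monotone)
    hσ.strictMono_blockKey.monotone
  exact (inv_mul_eq_one.1 (Equiv.ext fun i =>
    hσ.strictMono_blockKey.injective (congrFun hkey i))).symm

theorem atyp_comp (hσ : PreservesBlocks ℓ σ) (g : Fin n → ℂ) :
    atyp n ℓ (g ∘ σ) = atyp n ℓ g :=
  Finset.card_equiv (σ.prodCongr σ) fun ij => by simp [hσ ij.1, hσ.le_iff ij.2]

theorem eq_of_atyp_eq_one (hatyp : atyp n ℓ g = 1) {p q i j : Fin n} (hp : p.val < ℓ)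
    (hq : ℓ ≤ q.val) (hpq : g p + g q = 0) (hi : i.val < ℓ) (hj : ℓ ≤ j.val)
    (hij : g i + g j = 0) : i = p ∧ j = q := by
  obtain ⟨x, hx⟩ := Finset.card_eq_one.1 hatyp
  have hmem : ∀ a b : Fin n, a.val < ℓ → ℓ ≤ b.val → g a + g b = 0 → (a, b) = x := by
    intro a b ha hb hab
    rw [← Finset.mem_singleton, ← hx]
    simp [ha, hb, hab]
  simpa using (hmem i j hi hj hij).trans (hmem p q hp hq hpq).symm

end Blocks

section RootShift

variable {n ℓ : ℕ} {s : ℂ} {lam : Fin n → ℂ} {p q : Fin n}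

theorem sub_smul_root_apply_left (hpq : p ≠ q) (c : ℂ) :
    (lam - c • (eps n p - eps n q)) p = lam p - c := by
  simp [eps, hpq]

theorem sub_smul_root_apply_right (hpq : p ≠ q) (c : ℂ) :
    (lam - c • (eps n p - eps n q)) q = lam q + c := by
  simp [eps, hpq.symm]

theorem sub_smul_root_apply_of_ne {t : Fin n} (htp : t ≠ p) (htq : t ≠ q) (c : ℂ) :
    (lam - c • (eps n p - eps n q)) t = lam t := by
  simp [eps, htp, htq]

theorem InLambda.sub_natCast_smul_root (hlam : InLambda n ℓ s lam) (k : ℕ) (p q : Fin n) :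
    InLambda n ℓ s (lam - (k : ℂ) • (eps n p - eps n q)) := by
  refine hlam.of_exists_int_sub fun t =>
    ⟨-k * ((if t = p then 1 else 0) - (if t = q then 1 else 0)), ?_⟩
  simp only [eps, Pi.sub_apply, Pi.smul_apply, smul_eq_mul]
  split_ifs <;> push_cast <;> ring

theorem InLambdaPlus.exists_blockInjective_sub_smul_root (hlam : InLambdaPlus n ℓ s lam)
    (hp : p.val < ℓ) (hq : ℓ ≤ q.val) :
    ∃ k : ℕ, 0 < k ∧ BlockInjective ℓ (lam - (k : ℂ) • (eps n p - eps n q)) := by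
  classical
  have hpq : p ≠ q := Fin.ne_of_val_ne (by omega)
  -- the shifts `c` for which `λ_p - c` or `λ_q + c` equals another coordinate
  let bad : Finset ℂ := univ.image (fun i => lam p - lam i) ∪ univ.image (fun i => lam i - lam q)
  obtain ⟨k, hk⟩ := Infinite.exists_notMem_finset
    (bad.preimage (fun k : ℕ => ((k + 1 : ℕ) : ℂ)) (Nat.cast_injective.comp
      Nat.succ_injective).injOn)
  rw [Finset.mem_preimage] at hk
  set c : ℂ := ((k + 1 : ℕ) : ℂ)
  have hcollide : ∀ i j, i ≠ j → (i.val < ℓ ↔ j.val < ℓ) → (i = p ∨ i = q) →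
      (lam - c • (eps n p - eps n q)) i = (lam - c • (eps n p - eps n q)) j → c ∈ bad := by
    rintro i j hij hblock (rfl | rfl) he
    · have hjq : j ≠ q := fun h => by subst h; omega
      rw [sub_smul_root_apply_left hpq, sub_smul_root_apply_of_ne hij.symm hjq] at he
      exact Finset.mem_union_left _ (Finset.mem_image.2 ⟨j, mem_univ _, by linear_combination he⟩)
    · have hjp : j ≠ p := fun h => by subst h; omega
      rw [sub_smul_root_apply_right hpq, sub_smul_root_apply_of_ne hjp hij.symm] at he
      exact Finset.mem_union_right _ (Finset.mem_image.2 ⟨j, mem_univ _, by linear_combination -he⟩)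
  refine ⟨k + 1, k.succ_pos, fun i j hblock he => ?_⟩
  by_contra hij
  by_cases hi : i = p ∨ i = q
  · exact hk (hcollide i j hij hblock hi he)
  by_cases hj : j = p ∨ j = q
  · exact hk (hcollide j i (Ne.symm hij) hblock.symm hj he.symm)
  simp only [not_or] at hi hj
  rw [sub_smul_root_apply_of_ne hi.1 hi.2, sub_smul_root_apply_of_ne hj.1 hj.2] at he
  exact hij (hlam.blockInjective i j hblock he)

theorem atyp_sub_smul_root (hatyp : atyp n ℓ lam = 1) (hp : p.val < ℓ) (hq : ℓ ≤ q.val)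
    (hpq : lam p + lam q = 0) {c : ℂ}
    (hinj : BlockInjective ℓ (lam - c • (eps n p - eps n q))) :
    atyp n ℓ (lam - c • (eps n p - eps n q)) = 1 := by
  have hpq' : p ≠ q := Fin.ne_of_val_ne (by omega)
  set μ := lam - c • (eps n p - eps n q)
  have hμp : μ p = lam p - c := sub_smul_root_apply_left hpq' c
  have hμq : μ q = lam q + c := sub_smul_root_apply_right hpq' c
  -- otherwise `μ i = μ p` (if `j = q`) or `(i, j)` is an atypical pair of `lam`
  have hip : ∀ i j : Fin n, i.val < ℓ → ℓ ≤ j.val → μ i + μ j = 0 → i = p := by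
    intro i j hi hj he
    by_contra hip
    have hiq : i ≠ q := fun h => by subst h; omega
    have hμi : μ i = lam i := sub_smul_root_apply_of_ne hip hiq c
    rw [hμi] at he
    by_cases hjq : j = q
    · subst hjq
      rw [hμq] at he
      exact hip (hinj i p (by simp [hi, hp]) (by rw [hμi, hμp]; linear_combination he - hpq))
    · have hjp : j ≠ p := fun h => by subst h; omega
      rw [show μ j = lam j from sub_smul_root_apply_of_ne hjp hjq c] at he
      exact hip (eq_of_atyp_eq_one hatyp hp hq hpq hi hj he).1
  refine Finset.card_eq_one.2 ⟨(p, q), Finset.eq_singleton_iff_unique_mem.2 ⟨?_, ?_⟩⟩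
  · simp [hp, hq, hμp, hμq, hpq]
  · rintro ⟨i, j⟩ hij
    simp only [Finset.mem_filter, mem_univ, true_and] at hij
    obtain ⟨hi, hj, he⟩ := hij
    obtain rfl := (hip i j hi hj he).symm
    refine Prod.ext rfl ?_
    by_contra hjq
    have hjp : j ≠ p := fun h => by subst h; omega
    have hμj : μ j = lam j := sub_smul_root_apply_of_ne hjp hjq c
    rw [hμp, hμj] at he
    exact hjq (hinj j q (by simp [hq, not_lt.2 hj])
      (by rw [hμj, hμq]; linear_combination he - hpq))

end RootShift

section Approx

variable {n : ℕ} {lam : Fin n → ℂ}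

theorem mem_integralWeyl_of_forall_exists_int_sub {w : Equiv.Perm (Fin n)}
    (hw : ∀ i, ∃ m : ℤ, lam i - lam (w i) = m) : w ∈ IntegralWeyl n lam := by
  refine (mem_closure_isSwap ?_).2 ⟨Set.toFinite _, fun i => ?_⟩
  · rintro _ ⟨i, j, hij, -, rfl⟩
    exact ⟨i, j, hij, rfl⟩
  · by_cases hi : w i = i
    · rw [hi]
      exact MulAction.mem_orbit_self i
    · exact ⟨⟨Equiv.swap i (w i), Subgroup.subset_closure ⟨i, w i, Ne.symm hi, hw i, rfl⟩⟩,
        Equiv.swap_apply_left i (w i)⟩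

theorem pform_add_eps (x : Fin n → ℂ) (i j : Fin n) :
    pform x (eps n i + eps n j) = x i + x j := by
  simp [pform, eps, mul_add, Finset.sum_add_distrib]

theorem approx_sub_smul_root_comp {w : Equiv.Perm (Fin n)} (hw : w ∈ IntegralWeyl n lam)
    {p q : Fin n} (hpq : p ≠ q) (h0 : lam p + lam q = 0) (k : ℤ) :
    approx n lam ((lam - (k : ℂ) • (eps n p - eps n q)) ∘ w) :=
  ⟨w, hw, 1, fun _ => p, fun _ => q, fun _ => k, fun _ => hpq,
    fun t t' h => (h (Subsingleton.elim t t')).elim, fun _ => by rw [pform_add_eps, h0],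
    by simp⟩

end Approx

theorem stmt6_general {n ℓ : ℕ} (s : ℂ) (hs : ∀ m : ℤ, 2 * s ≠ (m : ℂ))
    (lam : Fin n → ℂ) (hlam : InLambdaPlus n ℓ s lam) (hatyp : atyp n ℓ lam = 1)
    (p q : Fin n) (hp : p.val < ℓ) (hq : ℓ ≤ q.val) (hpq : lam p + lam q = 0) :
    let α : Fin n → ℂ := eps n p - eps n q
    (∃ k : ℕ, 0 < k ∧ ∃ σ : Equiv.Perm (Fin n),
        InLambdaPlus n ℓ s ((lam - (k : ℂ) • α) ∘ σ)) ∧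
    (∀ k : ℕ, 0 < k →
      (∃ σ : Equiv.Perm (Fin n), InLambdaPlus n ℓ s ((lam - (k : ℂ) • α) ∘ σ)) →
      (∀ k' : ℕ, 0 < k' →
        (∃ σ : Equiv.Perm (Fin n), InLambdaPlus n ℓ s ((lam - (k' : ℂ) • α) ∘ σ)) →
        k ≤ k') →
      ∀ σ : Equiv.Perm (Fin n), InLambdaPlus n ℓ s ((lam - (k : ℂ) • α) ∘ σ) →
        (∀ σ' : Equiv.Perm (Fin n), InLambdaPlus n ℓ s ((lam - (k : ℂ) • α) ∘ σ') →
          (lam - (k : ℂ) • α) ∘ σ' = (lam - (k : ℂ) • α) ∘ σ) ∧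
        atyp n ℓ ((lam - (k : ℂ) • α) ∘ σ) = 1 ∧
        approx n lam ((lam - (k : ℂ) • α) ∘ σ)) := by
  intro α
  have hpq' : p ≠ q := Fin.ne_of_val_ne (by omega)
  have hμ (k : ℕ) : InLambda n ℓ s (lam - (k : ℂ) • α) := hlam.1.sub_natCast_smul_root k p q
  refine ⟨?_, fun k _ _ _ σ hσ => ?_⟩
  · obtain ⟨k, hk, hinj⟩ := hlam.exists_blockInjective_sub_smul_root hp hq
    exact ⟨k, hk, (hμ k).exists_perm_inLambdaPlus hinj⟩
  have hblocks : PreservesBlocks ℓ σ := (hμ k).preservesBlocks hs hσ.1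
  have hw : σ ∈ IntegralWeyl n lam :=
    mem_integralWeyl_of_forall_exists_int_sub fun i => hlam.1.exists_int_sub (hblocks i).symm
  refine ⟨fun σ' hσ' => by rw [hσ.perm_eq hs hσ'], ?_, ?_⟩
  · rw [atyp_comp hblocks]
    exact atyp_sub_smul_root hatyp hp hq hpq (hσ.blockInjective.of_comp hblocks)
  · simpa only [Int.cast_natCast] using approx_sub_smul_root_comp hw hpq' hpq k

/-- Let `2s ∉ ℤ`, `λ ∈ Λ⁺_{s^ℓ}(n)` with `♯λ = 1`, and let `(p,q)` with
`p ≤ ℓ < q` be the unique pair with `λ_p + λ_q = 0`; set `α = ε_p - ε_q`. Then: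
(i) there are a positive integer `k` and `σ ∈ S_n` with `σ(λ - kα) ∈ Λ⁺_{s^ℓ}(n)`;
and for the smallest such `k`: (ii) `λ⁻ := σ(λ - kα)` does not depend on the choice of `σ`;
(iii) `♯λ⁻ = 1`; (iv) `λ ≈ λ⁻`. -/
theorem stmt6 {n ℓ : ℕ} (hl : ℓ ≤ n) (s : ℂ) (hs : ∀ m : ℤ, 2 * s ≠ (m : ℂ))
    (lam : Fin n → ℂ) (hlam : InLambdaPlus n ℓ s lam) (hatyp : atyp n ℓ lam = 1)
    (p q : Fin n) (hp : p.val < ℓ) (hq : ℓ ≤ q.val) (hpq : lam p + lam q = 0) :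
    let α : Fin n → ℂ := eps n p - eps n q
    (∃ k : ℕ, 0 < k ∧ ∃ σ : Equiv.Perm (Fin n),
        InLambdaPlus n ℓ s ((lam - (k : ℂ) • α) ∘ σ)) ∧
    (∀ k : ℕ, 0 < k →
      (∃ σ : Equiv.Perm (Fin n), InLambdaPlus n ℓ s ((lam - (k : ℂ) • α) ∘ σ)) →
      (∀ k' : ℕ, 0 < k' →
        (∃ σ : Equiv.Perm (Fin n), InLambdaPlus n ℓ s ((lam - (k' : ℂ) • α) ∘ σ)) →
        k ≤ k') →
      ∀ σ : Equiv.Perm (Fin n), InLambdaPlus n ℓ s ((lam - (k : ℂ) • α) ∘ σ) →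
        (∀ σ' : Equiv.Perm (Fin n), InLambdaPlus n ℓ s ((lam - (k : ℂ) • α) ∘ σ') →
          (lam - (k : ℂ) • α) ∘ σ' = (lam - (k : ℂ) • α) ∘ σ) ∧
        atyp n ℓ ((lam - (k : ℂ) • α) ∘ σ) = 1 ∧
        approx n lam ((lam - (k : ℂ) • α) ∘ σ)) :=
  stmt6_general s hs lam hlam hatyp p q hp hq hpq
end
end

section
/- Let s ∈ ℂ with 2s ∉ ℤ and 0 ≤ ℓ ≤ n. The map λ ↦ λ⁻ is a bijection from the set {λ ∈ Λ⁺_{s^ℓ}(n) : ♯λ = 1} onto itself. -/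
open Finset

noncomputable section

/-- The relation `μ = λ⁻` for `λ ∈ Λ⁺_{s^ℓ}(n)` of atypicality one: for the (unique) pair
`(p,q)` with `p ≤ ℓ < q` and `λ_p + λ_q = 0` and `α = ε_p - ε_q`, `μ = σ(λ - kα)` lies in
`Λ⁺_{s^ℓ}(n)`, where `k` is the smallest positive integer such that some permutation of
`λ - kα` lies in `Λ⁺_{s^ℓ}(n)`. -/
def MinusRel (n ℓ : ℕ) (s : ℂ) (lam mu : Fin n → ℂ) : Prop :=
  ∃ p q : Fin n, p.val < ℓ ∧ ℓ ≤ q.val ∧ lam p + lam q = 0 ∧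
    ∃ k : ℕ, 0 < k ∧
      (∀ k' : ℕ, 0 < k' →
        (∃ σ : Equiv.Perm (Fin n),
          InLambdaPlus n ℓ s ((lam - (k' : ℂ) • (eps n p - eps n q)) ∘ σ)) → k ≤ k') ∧
      (∃ σ : Equiv.Perm (Fin n), mu = (lam - (k : ℂ) • (eps n p - eps n q)) ∘ σ) ∧
      InLambdaPlus n ℓ s mu

/-!
For `2s ∉ ℤ` the cosets `s + ℤ` and `-s + ℤ` are disjoint, so a permutation relating two vectors
of `Λ_{s^ℓ}(n)` preserves the two blocks of coordinates. Hence a vector of `Λ_{s^ℓ}(n)` has a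
rearrangement in `Λ⁺_{s^ℓ}(n)` iff it is injective on each block, and that rearrangement is unique
(sort each block by decreasing real part).

Let `α = ε_p - ε_q` for the atypical pair `(p, q)` of `λ`. Whenever `λ - kα` is block-injective
it still has atypicality one, so `λ⁻` is the sorted form of `λ - kα` for the least such `k > 0`.
Conversely, if `μ = σ(λ - kα)`, then `λ - cα` is a rearrangement of `μ + (k - c)α'`, where `α'`
is the root of the atypical pair of `μ`. So `k` is also the least `t > 0` making `μ + tα'`
block-injective, and `λ` is the sorted form of `μ + tα'`: this recovers `λ` from `μ`, and
starting from that `t` shows that every `μ` is attained.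
-/

namespace LambdaPlus

open Equiv

variable {n ℓ : ℕ} {s : ℂ}

def SameBlock (ℓ : ℕ) (i j : Fin n) : Prop := (i.val < ℓ ↔ j.val < ℓ)

lemma SameBlock.symm {i j : Fin n} (h : SameBlock ℓ i j) : SameBlock ℓ j i := Iff.symm h

lemma SameBlock.le_iff {i j : Fin n} (h : SameBlock ℓ i j) : ℓ ≤ i.val ↔ ℓ ≤ j.val := by
  simpa only [not_lt] using not_congr h

def BlockInjective (ℓ : ℕ) (f : Fin n → ℂ) : Prop :=
  ∀ i j, SameBlock ℓ i j → f i = f j → i = j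

lemma not_mem_both_cosets (hs : ∀ m : ℤ, 2 * s ≠ (m : ℂ)) {a : ℂ}
    (h₁ : ∃ m : ℤ, a - s = m) (h₂ : ∃ m : ℤ, a + s = m) : False := by
  obtain ⟨m₁, h₁⟩ := h₁
  obtain ⟨m₂, h₂⟩ := h₂
  exact hs (m₂ - m₁) (by push_cast; linear_combination h₂ - h₁)

lemma exists_int_sub_of_inLambda {f : Fin n → ℂ} (hf : InLambda n ℓ s f) {i j : Fin n}
    (hij : SameBlock ℓ i j) : ∃ m : ℤ, f i - f j = m := by
  by_cases hi : i.val < ℓ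
  · obtain ⟨a, ha⟩ := (hf i).1 hi
    obtain ⟨b, hb⟩ := (hf j).1 (hij.mp hi)
    exact ⟨a - b, by push_cast; linear_combination ha - hb⟩
  · obtain ⟨a, ha⟩ := (hf i).2 (not_lt.mp hi)
    obtain ⟨b, hb⟩ := (hf j).2 (not_lt.mp (mt hij.mpr hi))
    exact ⟨a - b, by push_cast; linear_combination ha - hb⟩

lemma sameBlock_of_inLambda_comp (hs : ∀ m : ℤ, 2 * s ≠ (m : ℂ)) {f : Fin n → ℂ}
    {σ : Perm (Fin n)} (hf : InLambda n ℓ s f) (hfσ : InLambda n ℓ s (f ∘ σ)) (i : Fin n) :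
    SameBlock ℓ i (σ i) := by
  constructor
  · intro hi
    by_contra hσi
    exact not_mem_both_cosets hs ((hfσ i).1 hi) ((hf (σ i)).2 (not_lt.mp hσi))
  · intro hσi
    by_contra hi
    exact not_mem_both_cosets hs ((hf (σ i)).1 hσi) ((hfσ i).2 (not_lt.mp hi))

lemma inLambda_comp {f : Fin n → ℂ} (hf : InLambda n ℓ s f) {σ : Perm (Fin n)}
    (hσ : ∀ i, SameBlock ℓ i (σ i)) : InLambda n ℓ s (f ∘ σ) := fun i =>
  ⟨fun hi => (hf (σ i)).1 ((hσ i).mp hi), fun hi => (hf (σ i)).2 ((hσ i).le_iff.mp hi)⟩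

lemma blockInjective_comp_iff {f : Fin n → ℂ} {σ : Perm (Fin n)}
    (hσ : ∀ i, SameBlock ℓ i (σ i)) :
    BlockInjective ℓ (f ∘ σ) ↔ BlockInjective ℓ f := by
  have hσ' : ∀ i j, SameBlock ℓ (σ i) (σ j) ↔ SameBlock ℓ i j := fun i j => by
    rw [SameBlock, SameBlock, ← show i.val < ℓ ↔ _ from hσ i,
      ← show j.val < ℓ ↔ _ from hσ j]
  constructor
  · intro h i j hij hf
    have := h (σ.symm i) (σ.symm j) (by rw [← hσ']; simpa using hij) (by simpa using hf)
    simpa using congrArg σ this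
  · intro h i j hij hf
    exact σ.injective (h _ _ ((hσ' i j).mpr hij) hf)

/-- `λ ∈ Λ⁺_{s^ℓ}(n)` exactly when this key is strictly increasing (`inLambdaPlus_iff`), so
sorting by it produces the dominant rearrangement. -/
def sortKey (ℓ : ℕ) (f : Fin n → ℂ) (t : Fin n) : ℕ ×ₗ ℝ :=
  toLex (if t.val < ℓ then 0 else 1, -(f t).re)

lemma sortKey_lt_sortKey_iff {f : Fin n → ℂ} {i j : Fin n} :
    sortKey ℓ f i < sortKey ℓ f j ↔
      (i.val < ℓ ∧ ℓ ≤ j.val) ∨ (SameBlock ℓ i j ∧ (f j).re < (f i).re) := by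
  unfold sortKey SameBlock
  rw [Prod.Lex.toLex_lt_toLex]
  split_ifs with hi hj hj <;> simp [hi, hj]
  omega

lemma sortKey_comp {f : Fin n → ℂ} {σ : Perm (Fin n)} (hσ : ∀ i, SameBlock ℓ i (σ i)) :
    sortKey ℓ (f ∘ σ) = sortKey ℓ f ∘ σ := by
  funext i
  simp only [sortKey, Function.comp_apply, show i.val < ℓ ↔ _ from hσ i]

lemma sameBlock_succ_iff {i : Fin n} (h : i.val + 1 < n) :
    SameBlock ℓ i ⟨i.val + 1, h⟩ ↔ i.val + 1 < ℓ ∨ ℓ ≤ i.val := by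
  show (i.val < ℓ ↔ i.val + 1 < ℓ) ↔ _
  omega

lemma inLambdaPlus_iff {f : Fin n → ℂ} :
    InLambdaPlus n ℓ s f ↔ InLambda n ℓ s f ∧ StrictMono (sortKey ℓ f) := by
  refine ⟨fun ⟨hf, hsucc⟩ => ⟨hf, ?_⟩,
    fun ⟨hf, hmono⟩ => ⟨hf, fun i h hb => ?_⟩⟩
  · cases n with
    | zero => exact fun i => i.elim0
    | succ n =>
      refine Fin.strictMono_iff_lt_succ.mpr fun i => sortKey_lt_sortKey_iff.mpr ?_
      by_cases hb : SameBlock ℓ i.castSucc i.succ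
      · obtain ⟨m, hm, he⟩ := hsucc i.castSucc (by simp) ((sameBlock_succ_iff _).mp hb)
        rw [show (⟨i.castSucc.val + 1, _⟩ : Fin (n + 1)) = i.succ from Fin.ext (by simp)] at he
        have hre := congrArg Complex.re he
        simp only [Complex.sub_re, Complex.intCast_re] at hre
        have : (0 : ℝ) < m := by exact_mod_cast hm
        exact Or.inr ⟨hb, by linarith⟩
      · left
        unfold SameBlock at hb
        simp only [Fin.val_castSucc, Fin.val_succ] at hb ⊢
        omega
  · have hb' := (sameBlock_succ_iff h).mpr hb
    obtain ⟨m, hm⟩ := exists_int_sub_of_inLambda hf hb'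
    have hlt := sortKey_lt_sortKey_iff.mp
      (hmono (show i < ⟨i.val + 1, h⟩ from Fin.lt_def.mpr (by simp)))
    have hre : (f ⟨i.val + 1, h⟩).re < (f i).re := by
      rcases hlt with ⟨hi, hj⟩ | ⟨-, hre⟩
      · exact absurd hb' (by unfold SameBlock; omega)
      · exact hre
    refine ⟨m, ?_, hm⟩
    have := congrArg Complex.re hm
    simp only [Complex.sub_re, Complex.intCast_re] at this
    exact_mod_cast (show (0 : ℝ) < m by linarith)

lemma sortKey_injective {f : Fin n → ℂ} (hf : InLambda n ℓ s f)
    (hinj : BlockInjective ℓ f) :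
    Function.Injective (sortKey ℓ f) := by
  intro i j hij
  simp only [sortKey, toLex_inj, Prod.mk.injEq] at hij
  have hb : SameBlock ℓ i j := by
    have hidx := hij.1
    unfold SameBlock; split_ifs at hidx <;> omega
  obtain ⟨m, hm⟩ := exists_int_sub_of_inLambda hf hb
  have hm0 : (m : ℝ) = 0 := by
    have := congrArg Complex.re hm
    simp only [Complex.sub_re, Complex.intCast_re] at this
    linarith [hij.2]
  refine hinj i j hb ?_
  rw [← sub_eq_zero, hm]
  exact_mod_cast hm0

lemma blockInjective_of_inLambdaPlus {f : Fin n → ℂ} (hf : InLambdaPlus n ℓ s f) :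
    BlockInjective ℓ f := by
  intro i j hij he
  refine (inLambdaPlus_iff.mp hf).2.injective ?_
  simp only [sortKey, he, show i.val < ℓ ↔ j.val < ℓ from hij]

lemma eq_of_inLambdaPlus_of_eq_comp (hs : ∀ m : ℤ, 2 * s ≠ (m : ℂ)) {v w : Fin n → ℂ}
    (hv : InLambdaPlus n ℓ s v) (hw : InLambdaPlus n ℓ s w) {τ : Perm (Fin n)}
    (hvw : v = w ∘ τ) : v = w := by
  subst hvw
  have hτ := sameBlock_of_inLambda_comp hs hw.1 hv.1
  have hmono := (inLambdaPlus_iff.mp hw).2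
  have hkey : sortKey ℓ w ∘ τ = sortKey ℓ w ∘ (1 : Perm (Fin n)) :=
    Tuple.unique_monotone (sortKey_comp hτ ▸ (inLambdaPlus_iff.mp hv).2.monotone) hmono.monotone
  have hτ1 : ∀ i, τ i = i := fun i => hmono.injective (congrFun hkey i)
  funext i
  simp [hτ1]

lemma exists_perm_inLambdaPlus {f : Fin n → ℂ} (hf : InLambda n ℓ s f)
    (hinj : BlockInjective ℓ f) : ∃ σ : Perm (Fin n), InLambdaPlus n ℓ s (f ∘ σ) := by
  set σ := Tuple.sort (sortKey ℓ f)
  -- the block indices get sorted too, and their only monotone rearrangement is the identity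
  have hmono : Monotone (sortKey ℓ f ∘ σ) := Tuple.monotone_sort _
  have hidx : Monotone fun t => (ofLex (sortKey ℓ f t)).1 := fun a b hab => by
    rw [Fin.le_def] at hab
    simp only [sortKey, ofLex_toLex]
    split_ifs <;> omega
  have hblock := Tuple.unique_monotone (f := fun t => (ofLex (sortKey ℓ f t)).1) (τ := 1)
    (Prod.Lex.monotone_fst_ofLex.comp hmono) hidx
  have hσ : ∀ i, SameBlock ℓ i (σ i) := fun i => by
    have := congrFun hblock i
    simp only [Function.comp_apply, sortKey, ofLex_toLex, Perm.coe_one, id] at this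
    unfold SameBlock; split_ifs at this <;> omega
  refine ⟨σ, inLambdaPlus_iff.mpr ⟨inLambda_comp hf hσ, ?_⟩⟩
  rw [sortKey_comp hσ]
  exact hmono.strictMono_of_injective ((sortKey_injective hf hinj).comp σ.injective)

lemma exists_perm_inLambdaPlus_iff (hs : ∀ m : ℤ, 2 * s ≠ (m : ℂ)) {f : Fin n → ℂ}
    (hf : InLambda n ℓ s f) :
    (∃ σ : Perm (Fin n), InLambdaPlus n ℓ s (f ∘ σ)) ↔ BlockInjective ℓ f :=
  ⟨fun ⟨_, hσ⟩ => (blockInjective_comp_iff (sameBlock_of_inLambda_comp hs hf hσ.1)).mp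
      (blockInjective_of_inLambdaPlus hσ),
    exists_perm_inLambdaPlus hf⟩

section RootShift

variable {f : Fin n → ℂ} {c : ℂ} {p q : Fin n}

lemma sub_smul_root_apply (t : Fin n) :
    (f - c • (eps n p - eps n q)) t =
      f t - (if t = p then c else 0) + (if t = q then c else 0) := by
  simp only [Pi.sub_apply, Pi.smul_apply, smul_eq_mul, eps]
  split_ifs <;> ring

lemma sub_smul_root_apply_left (hpq : p ≠ q) : (f - c • (eps n p - eps n q)) p = f p - c := by
  rw [sub_smul_root_apply]; simp [hpq]

lemma sub_smul_root_apply_right (hpq : p ≠ q) : (f - c • (eps n p - eps n q)) q = f q + c := by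
  rw [sub_smul_root_apply]; simp [hpq.symm]

lemma sub_smul_root_apply_of_ne {t : Fin n} (hp : t ≠ p) (hq : t ≠ q) :
    (f - c • (eps n p - eps n q)) t = f t := by
  rw [sub_smul_root_apply]; simp [hp, hq]

lemma sub_smul_root_comp (σ : Perm (Fin n)) :
    (f - c • (eps n p - eps n q)) ∘ σ =
      f ∘ σ - c • (eps n (σ.symm p) - eps n (σ.symm q)) := by
  funext t
  simp only [Function.comp_apply, Pi.sub_apply, Pi.smul_apply, smul_eq_mul, eps,
    Equiv.eq_symm_apply]

lemma inLambda_sub_smul_root (hf : InLambda n ℓ s f) (m : ℤ) :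
    InLambda n ℓ s (f - (m : ℂ) • (eps n p - eps n q)) := by
  have hint : ∀ t, ∃ k : ℤ, (f - (m : ℂ) • (eps n p - eps n q)) t = f t + k := fun t => by
    rw [sub_smul_root_apply]
    exact ⟨-(if t = p then m else 0) + (if t = q then m else 0),
      by split_ifs <;> push_cast <;> ring⟩
  intro t
  obtain ⟨k, hk⟩ := hint t
  refine ⟨fun ht => ?_, fun ht => ?_⟩
  · obtain ⟨a, ha⟩ := (hf t).1 ht
    exact ⟨a + k, by rw [hk]; push_cast; linear_combination ha⟩
  · obtain ⟨a, ha⟩ := (hf t).2 ht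
    exact ⟨a + k, by rw [hk]; push_cast; linear_combination ha⟩

end RootShift

def IsAtypicalPair (ℓ : ℕ) (f : Fin n → ℂ) (p q : Fin n) : Prop :=
  p.val < ℓ ∧ ℓ ≤ q.val ∧ f p + f q = 0

section Atypicality

variable {f : Fin n → ℂ} {c : ℂ} {p q : Fin n}

lemma IsAtypicalPair.ne (h : IsAtypicalPair ℓ f p q) : p ≠ q :=
  fun e => by have := h.1; have := h.2.1; rw [e] at *; omega

lemma IsAtypicalPair.not_sameBlock (h : IsAtypicalPair ℓ f p q) : ¬SameBlock ℓ p q :=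
  fun hb => by have := hb.mp h.1; have := h.2.1; omega

lemma atyp_eq_one_iff :
    atyp n ℓ f = 1 ↔ ∃! pq : Fin n × Fin n, IsAtypicalPair ℓ f pq.1 pq.2 := by
  rw [atyp, Finset.card_eq_one_iff_existsUnique]
  simp [IsAtypicalPair]

lemma atyp_comp {σ : Perm (Fin n)} (hσ : ∀ i, SameBlock ℓ i (σ i)) :
    atyp n ℓ (f ∘ σ) = atyp n ℓ f := by
  refine Finset.card_equiv (σ.prodCongr σ) fun pq => ?_
  simp only [mem_filter, mem_univ, true_and, Equiv.prodCongr_apply, Prod.map_fst, Prod.map_snd,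
    Function.comp_apply, show pq.1.val < ℓ ↔ _ from hσ pq.1, (hσ pq.2).le_iff]

lemma atyp_sub_smul_root (h1 : atyp n ℓ f = 1) (hpq : IsAtypicalPair ℓ f p q)
    (hinj : BlockInjective ℓ (f - c • (eps n p - eps n q))) :
    atyp n ℓ (f - c • (eps n p - eps n q)) = 1 := by
  obtain ⟨pq, -, huniq⟩ := atyp_eq_one_iff.mp h1
  have hne := hpq.ne
  obtain ⟨hp, hq, hsum⟩ := hpq
  have hgsum : (f - c • (eps n p - eps n q)) p + (f - c • (eps n p - eps n q)) q = 0 := by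
    rw [sub_smul_root_apply_left hne, sub_smul_root_apply_right hne]
    linear_combination hsum
  refine atyp_eq_one_iff.mpr ⟨(p, q), ⟨hp, hq, hgsum⟩, ?_⟩
  rintro ⟨i, j⟩ ⟨hi, hj, hij⟩
  dsimp only at hi hj hij
  have hiq : i ≠ q := fun e => by rw [e] at hi; omega
  have hjp : j ≠ p := fun e => by rw [e] at hj; omega
  by_cases hip : i = p
  · subst hip
    rw [hinj j q (by unfold SameBlock; omega) (by linear_combination hij - hgsum)]
  by_cases hjq : j = q
  · subst hjq
    rw [hinj i p (by unfold SameBlock; omega) (by linear_combination hij - hgsum)]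
  rw [sub_smul_root_apply_of_ne hip hiq, sub_smul_root_apply_of_ne hjp hjq] at hij
  have := (huniq (i, j) ⟨hi, hj, hij⟩).trans (huniq (p, q) ⟨hp, hq, hsum⟩).symm
  exact absurd (Prod.mk.inj this).1 hip

end Atypicality

lemma exists_forall_blockInjective_sub_smul_root {f : Fin n → ℂ} {p q : Fin n}
    (hf : BlockInjective ℓ f) (hpq : ¬SameBlock ℓ p q) :
    ∃ R : ℝ, ∀ c : ℂ, R < ‖c‖ →
      BlockInjective ℓ (f - c • (eps n p - eps n q)) := by
  obtain ⟨R, hR⟩ := (Set.finite_range fun ij : Fin n × Fin n => ‖f ij.1 - f ij.2‖).bddAbove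
  refine ⟨R, fun c hc => ?_⟩
  have hlt : ∀ a b, ‖f a - f b‖ < ‖c‖ := fun a b => (hR ⟨(a, b), rfl⟩).trans_lt hc
  have hne : p ≠ q := fun e => hpq (e ▸ Iff.rfl)
  -- a collision in a block involves one of `p`, `q`, and then `‖c‖` is some `‖f a - f b‖`
  have key : ∀ i j, SameBlock ℓ i j → i ≠ j → j ≠ p → j ≠ q →
      (f - c • (eps n p - eps n q)) i ≠ (f - c • (eps n p - eps n q)) j := by
    intro i j hij hij' hjp hjq he
    rw [sub_smul_root_apply_of_ne hjp hjq] at he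
    by_cases hip : i = p
    · subst hip
      rw [sub_smul_root_apply_left hne] at he
      exact (hlt i j).ne (by rw [show f i - f j = c by linear_combination he])
    by_cases hiq : i = q
    · subst hiq
      rw [sub_smul_root_apply_right hne] at he
      exact (hlt j i).ne (by rw [show f j - f i = c by linear_combination -he])
    rw [sub_smul_root_apply_of_ne hip hiq] at he
    exact hij' (hf i j hij he)
  intro i j hij he
  by_contra hij'
  by_cases hj : j = p ∨ j = q
  · refine key j i hij.symm (Ne.symm hij') ?_ ?_ he.symm <;> rintro rfl <;>
      rcases hj with rfl | rfl
    exacts [hij' rfl, hpq hij, hpq hij.symm, hij' rfl]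
  · rw [not_or] at hj
    exact key i j hij hij' hj.1 hj.2 he

lemma blockInjective_sub_smul_root_iff {lam mu : Fin n → ℂ} {p q : Fin n} {k : ℂ}
    {σ : Perm (Fin n)} (hσ : ∀ i, SameBlock ℓ i (σ i))
    (hmu : mu = (lam - k • (eps n p - eps n q)) ∘ σ) (c : ℂ) :
    BlockInjective ℓ (lam - c • (eps n p - eps n q)) ↔
      BlockInjective ℓ (mu + (k - c) • (eps n (σ.symm p) - eps n (σ.symm q))) := by
  rw [hmu, sub_smul_root_comp, sub_add, ← sub_smul, sub_sub_cancel, ← sub_smul_root_comp,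
    blockInjective_comp_iff hσ]

lemma IsAtypicalPair.sub_smul_root_comp {f : Fin n → ℂ} {p q : Fin n} {σ : Perm (Fin n)}
    (hσ : ∀ i, SameBlock ℓ i (σ i)) (h : IsAtypicalPair ℓ f p q) (c : ℂ) :
    IsAtypicalPair ℓ ((f - c • (eps n p - eps n q)) ∘ σ) (σ.symm p) (σ.symm q) := by
  have hne := h.ne
  obtain ⟨hp, hq, hsum⟩ := h
  refine ⟨(hσ _).mpr (by simpa using hp), (hσ _).le_iff.mpr (by simpa using hq), ?_⟩
  simp only [Function.comp_apply, Equiv.apply_symm_apply, sub_smul_root_apply_left hne,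
    sub_smul_root_apply_right hne]
  linear_combination hsum

lemma exists_pos_blockInjective_shift {f : Fin n → ℂ} {p q : Fin n} (hf : BlockInjective ℓ f)
    (hpq : ¬SameBlock ℓ p q) : ∃ k : ℕ, 0 < k ∧
      BlockInjective ℓ (f - (k : ℂ) • (eps n p - eps n q)) ∧
      BlockInjective ℓ (f + (k : ℂ) • (eps n p - eps n q)) := by
  obtain ⟨R, hR⟩ := exists_forall_blockInjective_sub_smul_root hf hpq
  obtain ⟨k, hk⟩ := exists_nat_gt (max R 0)
  have hRk : R < k := (le_max_left _ _).trans_lt hk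
  refine ⟨k, by exact_mod_cast (le_max_right _ _).trans_lt hk, hR k (by simpa using hRk), ?_⟩
  simpa [neg_smul, sub_neg_eq_add] using hR (-(k : ℂ)) (by simpa using hRk)

lemma inLambda_sub_natCast_smul_root {f : Fin n → ℂ} (hf : InLambda n ℓ s f) (k : ℕ)
    (p q : Fin n) : InLambda n ℓ s (f - (k : ℂ) • (eps n p - eps n q)) := by
  exact_mod_cast inLambda_sub_smul_root hf (k : ℤ)

lemma inLambda_add_natCast_smul_root {f : Fin n → ℂ} (hf : InLambda n ℓ s f) (k : ℕ)
    (p q : Fin n) : InLambda n ℓ s (f + (k : ℂ) • (eps n p - eps n q)) := by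
  simpa [neg_smul, sub_neg_eq_add] using inLambda_sub_smul_root hf (p := p) (q := q) (-k)

def lowerShifts (ℓ : ℕ) (f : Fin n → ℂ) (p q : Fin n) : Set ℕ :=
  {k | 0 < k ∧ BlockInjective ℓ (f - (k : ℂ) • (eps n p - eps n q))}

def raiseShifts (ℓ : ℕ) (f : Fin n → ℂ) (p q : Fin n) : Set ℕ :=
  {k | 0 < k ∧ BlockInjective ℓ (f + (k : ℂ) • (eps n p - eps n q))}

lemma minusRel_iff (hs : ∀ m : ℤ, 2 * s ≠ (m : ℂ)) {lam mu : Fin n → ℂ} {p q : Fin n}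
    (hlam : InLambdaPlus n ℓ s lam) (hat : atyp n ℓ lam = 1)
    (hpq : IsAtypicalPair ℓ lam p q) :
    MinusRel n ℓ s lam mu ↔ InLambdaPlus n ℓ s mu ∧ ∃ k : ℕ,
      IsLeast (lowerShifts ℓ lam p q) k ∧
      ∃ σ : Perm (Fin n), mu = (lam - (k : ℂ) • (eps n p - eps n q)) ∘ σ := by
  have hsort (p q : Fin n) (k : ℕ) :=
    exists_perm_inLambdaPlus_iff hs (inLambda_sub_natCast_smul_root hlam.1 k p q)
  constructor
  · rintro ⟨p', q', hp', hq', hsum', k, hk, hmin, ⟨σ, rfl⟩, hmu⟩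
    obtain ⟨pq, -, huniq⟩ := atyp_eq_one_iff.mp hat
    obtain ⟨rfl, rfl⟩ : p' = p ∧ q' = q :=
      Prod.mk.inj ((huniq (p', q') ⟨hp', hq', hsum'⟩).trans (huniq (p, q) hpq).symm)
    exact ⟨hmu, k, ⟨⟨hk, (hsort p' q' k).mp ⟨σ, hmu⟩⟩,
      fun j ⟨hj, hinj⟩ => hmin j hj ((hsort p' q' j).mpr hinj)⟩, σ, rfl⟩
  · rintro ⟨hmu, k, ⟨⟨hk, -⟩, hleast⟩, σ, rfl⟩
    exact ⟨p, q, hpq.1, hpq.2.1, hpq.2.2, k, hk,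
      fun j hj hsortj => hleast ⟨hj, (hsort p q j).mp hsortj⟩, ⟨σ, rfl⟩, hmu⟩

theorem existsUnique_minusRel_image (hs : ∀ m : ℤ, 2 * s ≠ (m : ℂ)) {lam : Fin n → ℂ}
    (hlam : InLambdaPlus n ℓ s lam) (hat : atyp n ℓ lam = 1) :
    ∃! mu : Fin n → ℂ,
      (InLambdaPlus n ℓ s mu ∧ atyp n ℓ mu = 1) ∧ MinusRel n ℓ s lam mu := by
  obtain ⟨⟨p, q⟩, hpq, -⟩ := atyp_eq_one_iff.mp hat
  dsimp only at hpq
  obtain ⟨k₀, hk₀, hinj, -⟩ :=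
    exists_pos_blockInjective_shift (blockInjective_of_inLambdaPlus hlam) hpq.not_sameBlock
  obtain ⟨k, hk⟩ : ∃ k : ℕ,
      IsLeast (lowerShifts ℓ lam p q) k :=
    ⟨_, isLeast_csInf ⟨k₀, hk₀, hinj⟩⟩
  have hlamk := inLambda_sub_natCast_smul_root hlam.1 k p q
  obtain ⟨σ, hmu⟩ := (exists_perm_inLambdaPlus_iff hs hlamk).mpr hk.1.2
  have hσ := sameBlock_of_inLambda_comp hs hlamk hmu.1
  simp_rw [minusRel_iff hs hlam hat hpq]
  have hat' := (atyp_comp hσ).trans (atyp_sub_smul_root hat hpq hk.1.2)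
  refine ⟨_, ⟨⟨hmu, hat'⟩, hmu, k, hk, σ, rfl⟩, ?_⟩
  rintro mu ⟨-, hmu', k', hk', σ', rfl⟩
  obtain rfl := hk'.unique hk
  exact eq_of_inLambdaPlus_of_eq_comp hs hmu' hmu (τ := σ'.trans σ.symm) (by ext; simp)

lemma exists_perm_eq_add_smul_root_of_minusRel (hs : ∀ m : ℤ, 2 * s ≠ (m : ℂ))
    {lam mu : Fin n → ℂ} {p q : Fin n} (hlam : InLambdaPlus n ℓ s lam)
    (hat : atyp n ℓ mu = 1)
    (hpq : IsAtypicalPair ℓ mu p q) (h : MinusRel n ℓ s lam mu) :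
    ∃ k : ℕ, IsLeast (raiseShifts ℓ mu p q) k ∧
      ∃ σ : Perm (Fin n), lam ∘ σ = mu + (k : ℂ) • (eps n p - eps n q) := by
  obtain ⟨p₁, q₁, hp₁, hq₁, hsum₁, k, hk, hmin, ⟨σ, hmuσ⟩, hmu⟩ := h
  have hσ := sameBlock_of_inLambda_comp hs (inLambda_sub_natCast_smul_root hlam.1 k p₁ q₁)
    (hmuσ ▸ hmu.1)
  obtain ⟨pq, -, huniq⟩ := atyp_eq_one_iff.mp hat
  have hpair := IsAtypicalPair.sub_smul_root_comp hσ ⟨hp₁, hq₁, hsum₁⟩ (k : ℂ)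
  rw [← hmuσ] at hpair
  obtain ⟨hp, hq⟩ : σ.symm p₁ = p ∧ σ.symm q₁ = q :=
    Prod.mk.inj ((huniq _ hpair).trans (huniq (p, q) hpq).symm)
  have htr := blockInjective_sub_smul_root_iff hσ hmuσ
  rw [hp, hq] at htr
  refine ⟨k, ⟨⟨hk, by
    simpa using (htr 0).mp (by simpa using blockInjective_of_inLambdaPlus hlam)⟩,
    fun j ⟨hj, hinj⟩ => ?_⟩, σ, ?_⟩
  · by_contra hjk
    have hsort := (exists_perm_inLambdaPlus_iff hs
      (inLambda_sub_natCast_smul_root hlam.1 (k - j) p₁ q₁)).mpr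
      ((htr _).mpr (by rwa [Nat.cast_sub (by omega), sub_sub_cancel]))
    have := hmin (k - j) (by omega) hsort
    omega
  · rw [hmuσ, sub_smul_root_comp, hp, hq, sub_add_cancel]

lemma minusRel_of_isLeast_add_smul_root (hs : ∀ m : ℤ, 2 * s ≠ (m : ℂ)) {mu : Fin n → ℂ}
    {p q : Fin n} {t : ℕ} {σ : Perm (Fin n)} (hmu : InLambdaPlus n ℓ s mu)
    (hat : atyp n ℓ mu = 1) (hpq : IsAtypicalPair ℓ mu p q)
    (ht : IsLeast (raiseShifts ℓ mu p q) t)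
    (hlam : InLambdaPlus n ℓ s ((mu + (t : ℂ) • (eps n p - eps n q)) ∘ σ)) :
    atyp n ℓ ((mu + (t : ℂ) • (eps n p - eps n q)) ∘ σ) = 1 ∧
      MinusRel n ℓ s ((mu + (t : ℂ) • (eps n p - eps n q)) ∘ σ) mu := by
  have hσ := sameBlock_of_inLambda_comp hs (inLambda_add_natCast_smul_root hmu.1 t p q) hlam.1
  have hv : mu + (t : ℂ) • (eps n p - eps n q) = mu - (-(t : ℂ)) • (eps n p - eps n q) := by
    rw [neg_smul, sub_neg_eq_add]
  have hpair := hv ▸ hpq.sub_smul_root_comp hσ (-(t : ℂ))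
  have hat' := (atyp_comp hσ).trans (hv ▸ atyp_sub_smul_root hat hpq (hv ▸ ht.1.2))
  have hmu_eq : mu = ((mu + (t : ℂ) • (eps n p - eps n q)) ∘ σ -
      (t : ℂ) • (eps n (σ.symm p) - eps n (σ.symm q))) ∘ σ.symm := by
    rw [sub_smul_root_comp]
    ext x
    simp
  have htr := blockInjective_sub_smul_root_iff
    (fun i => by simpa using (hσ (σ.symm i)).symm) hmu_eq
  simp only [Equiv.symm_symm, Equiv.apply_symm_apply] at htr
  refine ⟨hat', (minusRel_iff hs hlam hat' hpair).mpr ⟨hmu, t, ⟨⟨ht.1.1, (htr t).mpr ?_⟩,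
    fun c ⟨hc, hinjc⟩ => ?_⟩, σ.symm, hmu_eq⟩⟩
  · simpa using blockInjective_of_inLambdaPlus hmu
  · by_contra hct
    have : t ≤ t - c := ht.2 (show t - c ∈ _ from
      ⟨by omega, by rw [Nat.cast_sub (by omega)]; exact (htr c).mp hinjc⟩)
    omega

theorem existsUnique_minusRel_preimage (hs : ∀ m : ℤ, 2 * s ≠ (m : ℂ)) {mu : Fin n → ℂ}
    (hmu : InLambdaPlus n ℓ s mu) (hat : atyp n ℓ mu = 1) :
    ∃! lam : Fin n → ℂ,
      (InLambdaPlus n ℓ s lam ∧ atyp n ℓ lam = 1) ∧ MinusRel n ℓ s lam mu := by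
  obtain ⟨⟨p, q⟩, hpq, -⟩ := atyp_eq_one_iff.mp hat
  dsimp only at hpq
  obtain ⟨t₀, ht₀, -, hinj⟩ :=
    exists_pos_blockInjective_shift (blockInjective_of_inLambdaPlus hmu) hpq.not_sameBlock
  obtain ⟨t, ht⟩ : ∃ t : ℕ,
      IsLeast (raiseShifts ℓ mu p q) t :=
    ⟨_, isLeast_csInf ⟨t₀, ht₀, hinj⟩⟩
  obtain ⟨σ, hlam⟩ :=
    exists_perm_inLambdaPlus (inLambda_add_natCast_smul_root hmu.1 t p q) ht.1.2
  obtain ⟨hat', hrel⟩ := minusRel_of_isLeast_add_smul_root hs hmu hat hpq ht hlam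
  refine ⟨_, ⟨⟨hlam, hat'⟩, hrel⟩, ?_⟩
  rintro lam' ⟨⟨hlam', -⟩, hrel'⟩
  obtain ⟨k, hk, σ', hσ'⟩ := exists_perm_eq_add_smul_root_of_minusRel hs hlam' hat hpq hrel'
  obtain rfl := hk.unique ht
  refine eq_of_inLambdaPlus_of_eq_comp hs hlam' hlam (τ := σ'.symm.trans σ.symm) ?_
  rw [← hσ']
  ext x
  simp

end LambdaPlus

theorem stmt7_general {n ℓ : ℕ} (s : ℂ) (hs : ∀ m : ℤ, 2 * s ≠ (m : ℂ)) :
    (∀ lam : Fin n → ℂ, InLambdaPlus n ℓ s lam → atyp n ℓ lam = 1 →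
      ∃! mu : Fin n → ℂ,
        (InLambdaPlus n ℓ s mu ∧ atyp n ℓ mu = 1) ∧ MinusRel n ℓ s lam mu) ∧
    (∀ mu : Fin n → ℂ, InLambdaPlus n ℓ s mu → atyp n ℓ mu = 1 →
      ∃! lam : Fin n → ℂ,
        (InLambdaPlus n ℓ s lam ∧ atyp n ℓ lam = 1) ∧ MinusRel n ℓ s lam mu) :=
  ⟨fun _ hlam hat => LambdaPlus.existsUnique_minusRel_image hs hlam hat,
    fun _ hmu hat => LambdaPlus.existsUnique_minusRel_preimage hs hmu hat⟩

/-- For `2s ∉ ℤ`, the map `λ ↦ λ⁻` is a bijection from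
`{λ ∈ Λ⁺_{s^ℓ}(n) : ♯λ = 1}` onto itself: every `λ` in this set has a unique image `λ⁻` in
the set, and every `μ` in the set is `λ⁻` for a unique `λ` in the set. -/
theorem stmt7 {n ℓ : ℕ} (hl : ℓ ≤ n) (s : ℂ) (hs : ∀ m : ℤ, 2 * s ≠ (m : ℂ)) :
    (∀ lam : Fin n → ℂ, InLambdaPlus n ℓ s lam → atyp n ℓ lam = 1 →
      ∃! mu : Fin n → ℂ,
        (InLambdaPlus n ℓ s mu ∧ atyp n ℓ mu = 1) ∧ MinusRel n ℓ s lam mu) ∧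
    (∀ mu : Fin n → ℂ, InLambdaPlus n ℓ s mu → atyp n ℓ mu = 1 →
      ∃! lam : Fin n → ℂ,
        (InLambdaPlus n ℓ s lam ∧ atyp n ℓ lam = 1) ∧ MinusRel n ℓ s lam mu) :=
  stmt7_general s hs

end
end

section
/- Let λ ∈ ℂ^n be of standard block form with blocks I_1,…,I_k. Define Φ_λ = {α ∈ Φ : (λ, α) ∈ ℤ} and Φ̄_λ = {α ∈ Φ : (λ, ᾱ) ∈ ℤ} ∪ Φ_λ. Then for a root α = ε_i − ε_j ∈ Φ one has α ∈ Φ̄_λ if and only if i and j lie in the same block I_r. -/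
open Finset

noncomputable section

section Aux

variable {k : ℕ} (sz : Fin k → ℕ)

private def bstartAux (r : Fin k) : ℕ := ∑ r' ∈ Finset.univ.filter (· < r), sz r'

private lemma bstartAux_succ (r : Fin k) (h : r.val + 1 < k) :
    bstartAux sz ⟨r.val + 1, h⟩ = bstartAux sz r + sz r := by
  unfold bstartAux
  have he : Finset.univ.filter (· < (⟨r.val + 1, h⟩ : Fin k))
      = insert r (Finset.univ.filter (· < r)) := by
    ext x
    simp only [Finset.mem_filter, Finset.mem_univ, true_and, Finset.mem_insert, Fin.lt_def,
      Fin.ext_iff]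
    omega
  rw [he, Finset.sum_insert (by simp)]
  ring

private lemma bstartAux_last (r : Fin k) (h : r.val + 1 = k) :
    bstartAux sz r + sz r = ∑ r', sz r' := by
  have he : (Finset.univ : Finset (Fin k))
      = insert r (Finset.univ.filter (· < r)) := by
    ext x
    simp only [Finset.mem_filter, Finset.mem_univ, true_and, Finset.mem_insert, Fin.lt_def,
      Fin.ext_iff, true_iff]
    have := x.isLt
    omega
  rw [he, Finset.sum_insert (by simp)]
  unfold bstartAux
  ring

private lemma exists_block_aux (hk : 0 < k) (i : ℕ) (hi : i < ∑ r', sz r') :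
    ∃ r : Fin k, bstartAux sz r ≤ i ∧ i < bstartAux sz r + sz r := by
  by_contra hc
  push_neg at hc
  have key : ∀ m (hm : m < k), bstartAux sz ⟨m, hm⟩ ≤ i := by
    intro m
    induction m with
    | zero => intro hm; simp [bstartAux, Fin.lt_def]
    | succ p ih =>
      intro hm
      have hp : p < k := by omega
      have h1 := ih hp
      have h2 := hc ⟨p, hp⟩ h1
      rw [bstartAux_succ sz ⟨p, hp⟩ hm]
      omega
  have hlast : k - 1 < k := by omega
  have h1 := key (k-1) hlast
  have h2 := hc ⟨k-1, hlast⟩ h1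
  have h3 := bstartAux_last sz ⟨k-1, hlast⟩ (by simp; omega)
  omega

end Aux

private lemma lam_block {n : ℕ} {lam : Fin n → ℂ} (D : StdBlockData n lam)
    (r : Fin D.k) (i : Fin n) (h1 : blkStart D r ≤ i.val)
    (h2 : i.val < blkStart D r + D.sz r) :
    (∃ m : ℤ, lam i - D.s r = (m : ℂ)) ∨ (∃ m : ℤ, lam i + D.s r = (m : ℂ)) := by
  unfold blkStart at h1 h2
  have h := D.hlam r i h1 h2
  by_cases hc : i.val < (∑ r' ∈ Finset.univ.filter (· < r), D.sz r') + D.ell r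
  · exact Or.inl (h.1 hc)
  · exact Or.inr (h.2 (by omega))

/-- For `λ` of standard block form and a root `α = ε_i - ε_j`,
`α ∈ Φ̄_λ` (i.e. `(λ, ᾱ) ∈ ℤ` or `(λ, α) ∈ ℤ`) if and only if `i` and `j` lie in the same
block. -/
theorem stmt11 {n : ℕ} (lam : Fin n → ℂ) (D : StdBlockData n lam)
    (i j : Fin n) (hij : i ≠ j) :
    ((∃ m : ℤ, pform lam (eps n i + eps n j) = (m : ℂ)) ∨
      (∃ m : ℤ, pform lam (eps n i - eps n j) = (m : ℂ)))
    ↔ ∃ r : Fin D.k, i ∈ blockSet D r ∧ j ∈ blockSet D r := by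
  have pfadd : pform lam (eps n i + eps n j) = lam i + lam j := by
    simp [pform, eps, mul_add, Finset.sum_add_distrib, mul_ite, Finset.sum_ite_eq']
  have pfsub : pform lam (eps n i - eps n j) = lam i - lam j := by
    simp [pform, eps, mul_sub, Finset.sum_sub_distrib, mul_ite, Finset.sum_ite_eq']
  have hk0 : 0 < D.k := by have := D.hk; omega
  have hblkEq : ∀ r : Fin D.k, bstartAux D.sz r = blkStart D r := fun r => rfl
  constructor
  · rintro hyp
    obtain ⟨ri, hri1, hri2⟩ := exists_block_aux D.sz hk0 i.val (by rw [D.hsum]; exact i.isLt)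
    obtain ⟨rj, hrj1, hrj2⟩ := exists_block_aux D.sz hk0 j.val (by rw [D.hsum]; exact j.isLt)
    rw [hblkEq] at hri1 hri2 hrj1 hrj2
    have hri := lam_block D ri i hri1 hri2
    have hrj := lam_block D rj j hrj1 hrj2
    have hEq : ri = rj := by
      by_contra hne
      rcases hyp with ⟨m, hm⟩ | ⟨m, hm⟩
      · rw [pfadd] at hm
        rcases hri with ⟨a, ha⟩ | ⟨a, ha⟩ <;> rcases hrj with ⟨b, hb⟩ | ⟨b, hb⟩
        · exact (D.hdist ri rj hne).2 (m - a - b)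
            (by push_cast; linear_combination hm - ha - hb)
        · exact (D.hdist ri rj hne).1 (m - a - b)
            (by push_cast; linear_combination hm - ha - hb)
        · exact (D.hdist ri rj hne).1 (a + b - m)
            (by push_cast; linear_combination ha + hb - hm)
        · exact (D.hdist ri rj hne).2 (a + b - m)
            (by push_cast; linear_combination ha + hb - hm)
      · rw [pfsub] at hm
        rcases hri with ⟨a, ha⟩ | ⟨a, ha⟩ <;> rcases hrj with ⟨b, hb⟩ | ⟨b, hb⟩
        · exact (D.hdist ri rj hne).1 (m - a + b)
            (by push_cast; linear_combination hm - ha + hb)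
        · exact (D.hdist ri rj hne).2 (m - a + b)
            (by push_cast; linear_combination hm - ha + hb)
        · exact (D.hdist ri rj hne).2 (a - b - m)
            (by push_cast; linear_combination ha - hb - hm)
        · exact (D.hdist ri rj hne).1 (a - b - m)
            (by push_cast; linear_combination ha - hb - hm)
    exact ⟨ri, ⟨hri1, hri2⟩, ⟨hEq ▸ hrj1, hEq ▸ hrj2⟩⟩
  · rintro ⟨r, ⟨hi1, hi2⟩, ⟨hj1, hj2⟩⟩
    have hri := lam_block D r i hi1 hi2
    have hrj := lam_block D r j hj1 hj2
    rcases hri with ⟨a, ha⟩ | ⟨a, ha⟩ <;> rcases hrj with ⟨b, hb⟩ | ⟨b, hb⟩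
    · exact Or.inr ⟨a - b, by rw [pfsub]; push_cast; linear_combination ha - hb⟩
    · exact Or.inl ⟨a + b, by rw [pfadd]; push_cast; linear_combination ha + hb⟩
    · exact Or.inl ⟨a + b, by rw [pfadd]; push_cast; linear_combination ha + hb⟩
    · exact Or.inr ⟨a - b, by rw [pfsub]; push_cast; linear_combination ha - hb⟩

end
end
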